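/- arXiv:2002.00433 — 5 statements merged into one kernel-verified Lean document; each statement's English description precedes it below -/
import Mathlib

section
/- Suppose α₁,…,α_d,1 are linearly independent over ℚ and let q₁<q₂<⋯ be the best approximation denominators of α=(α₁,…,α_d). Then α is badly approximable if and only if sup_{j≥1} q_{j+1}/q_j < ∞. -/
/-!
If `ξ_ν ≥ c q_ν^{-1/d}`, Dirichlet's theorem at precision `ξ_ν` yields some `m ≤ (2/ξ_ν)^d`
with a smaller error, so `q_{ν+1} ≤ m ≤ (2/c)^d q_ν`.

Conversely, assume `q_{ν+1} ≤ C q_ν`; it suffices to bound `q_ν ξ_ν^d` from below. By the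
`ℚ`-independence of `1, α₁, …, α_d`, a proper rational subspace contains only finitely many of the
integer points `(q_μ, p_μ)`. Hence, starting from `μ = ν`, one can pick `d + 1` independent points
such that each new one has index `e + 1` where the point of index `e ≥ ν` lies in the span of the
previous ones. Their integer determinant has absolute value at least `1`. Subtracting
`q_{e+1}/q_e` times the point of index `e` from the point of index `e + 1` leaves the
determinant unchanged and turns it into `q_ν` times a `d × d` determinant with entries at most
`(C + 1) ξ_ν`, so `1 ≤ q_ν d! ((C + 1) ξ_ν)^d`.
-/

/-- Distance from a real number to the nearest integer. -/
noncomputable def dist01 (x : ℝ) : ℝ := |x - (round x : ℝ)|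

/-- `max_{1 ≤ j ≤ d} ‖q α_j‖`. -/
noncomputable def simErr (d : ℕ) (α : Fin d → ℝ) (q : ℕ) : ℝ :=
  ⨆ j : Fin d, dist01 ((q : ℝ) * α j)

/-- `q` enumerates (in increasing order) all best approximation denominators of `α`. -/
def IsBestApproxDenoms (d : ℕ) (α : Fin d → ℝ) (q : ℕ → ℕ) : Prop :=
  StrictMono q ∧ (∀ ν, 0 < q ν) ∧
  (∀ ν, ∀ m : ℕ, 0 < m → m < q ν → simErr d α (q ν) < simErr d α m) ∧
  (∀ m : ℕ, 0 < m →
    (∀ m' : ℕ, 0 < m' → m' < m → simErr d α m < simErr d α m') → ∃ ν, q ν = m)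

/-- `α` is badly approximable: `inf_{q ∈ ℤ₊} q^{1/d} max_j ‖q α_j‖ > 0`. -/
def IsBadlyApprox (d : ℕ) (α : Fin d → ℝ) : Prop :=
  ∃ c : ℝ, 0 < c ∧ ∀ m : ℕ, 0 < m → c ≤ (m : ℝ) ^ ((1 : ℝ) / d) * simErr d α m

lemma simErr_nonneg (d : ℕ) (α : Fin d → ℝ) (m : ℕ) : 0 ≤ simErr d α m :=
  Real.iSup_nonneg fun _ => abs_nonneg _

lemma simErr_le_of_forall {d : ℕ} {α : Fin d → ℝ} {m : ℕ} {b : ℝ} (hb : 0 ≤ b)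
    (h : ∀ j, dist01 ((m : ℝ) * α j) ≤ b) : simErr d α m ≤ b :=
  Real.iSup_le h hb

lemma simErr_le_half (d : ℕ) (α : Fin d → ℝ) (m : ℕ) : simErr d α m ≤ 1 / 2 :=
  simErr_le_of_forall (by norm_num) fun _ => abs_sub_round _

lemma dist01_le_simErr (d : ℕ) (α : Fin d → ℝ) (m : ℕ) (j : Fin d) :
    dist01 ((m : ℝ) * α j) ≤ simErr d α m :=
  le_ciSup (f := fun j => dist01 ((m : ℝ) * α j)) (Set.finite_range _).bddAbove j

lemma simErr_zero_dim (α : Fin 0 → ℝ) (m : ℕ) : simErr 0 α m = 0 :=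
  Real.iSup_of_isEmpty _

lemma dist01_sub_le_of_floor_fract_mul_eq {a b : ℝ} {K : ℕ} (hK : 0 < K)
    (h : ⌊Int.fract a * K⌋₊ = ⌊Int.fract b * K⌋₊) : dist01 (b - a) ≤ 1 / K := by
  have hK' : (0 : ℝ) < K := by exact_mod_cast hK
  have hfloor : ⌊Int.fract a * K⌋ = ⌊Int.fract b * K⌋ := by
    rw [← Int.natCast_floor_eq_floor (by positivity), ← Int.natCast_floor_eq_floor (by positivity),
      h]
  have hclose := Int.abs_sub_lt_one_of_floor_eq_floor hfloor
  rw [← sub_mul, abs_mul, abs_of_pos hK', ← lt_div_iff₀ hK'] at hclose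
  calc dist01 (b - a) ≤ |b - a - ((⌊b⌋ - ⌊a⌋ : ℤ) : ℝ)| := round_le _ _
    _ = |Int.fract a - Int.fract b| := by
        rw [abs_sub_comm (Int.fract a), Int.fract, Int.fract]; push_cast; congr 1; ring
    _ ≤ 1 / K := hclose.le

/-- Dirichlet's simultaneous approximation theorem, by pigeonhole on the cells of side `1 / K`
of the unit cube. -/
theorem exists_simErr_le_inv (d : ℕ) (α : Fin d → ℝ) {K : ℕ} (hK : 0 < K) :
    ∃ m : ℕ, 0 < m ∧ m ≤ K ^ d ∧ simErr d α m ≤ 1 / K := by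
  have hK' : (0 : ℝ) < K := by exact_mod_cast hK
  let cell : Fin (K ^ d + 1) → Fin d → Fin K := fun x j =>
    ⟨⌊Int.fract ((x : ℝ) * α j) * K⌋₊, (Nat.floor_lt (by positivity)).2 <| by
      simpa using mul_lt_mul_of_pos_right (Int.fract_lt_one ((x : ℝ) * α j)) hK'⟩
  obtain ⟨x, y, hne, hxy⟩ := Fintype.exists_ne_map_eq_of_card_lt cell (by simp)
  wlog hlt : x < y generalizing x y
  · exact this y x hne.symm hxy.symm (lt_of_le_of_ne (not_lt.mp hlt) hne.symm)
  refine ⟨y - x, Nat.sub_pos_of_lt hlt, by omega,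
    simErr_le_of_forall (by positivity) fun j => ?_⟩
  rw [Nat.cast_sub hlt.le, sub_mul]
  exact dist01_sub_le_of_floor_fract_mul_eq hK (congrArg Fin.val (congrFun hxy j))

namespace IsBestApproxDenoms

variable {d : ℕ} {α : Fin d → ℝ} {q : ℕ → ℕ}

lemma dim_pos (hq : IsBestApproxDenoms d α q) : 0 < d := by
  obtain ⟨hmono, hpos, hmin, -⟩ := hq
  refine Nat.pos_of_ne_zero fun hd => ?_
  subst hd
  have := hmin 1 (q 0) (hpos 0) (hmono zero_lt_one)
  simp [simErr_zero_dim] at this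

lemma strictAnti (hq : IsBestApproxDenoms d α q) : StrictAnti fun ν => simErr d α (q ν) :=
  fun _ ν h => hq.2.2.1 ν _ (hq.2.1 _) (hq.1 h)

lemma simErr_le_of_lt_succ (hq : IsBestApproxDenoms d α q) {ν m : ℕ} (hm : 0 < m)
    (hlt : m < q (ν + 1)) : simErr d α (q ν) ≤ simErr d α m := by
  classical
  by_contra! hcon
  have hex : ∃ k, 0 < k ∧ simErr d α k < simErr d α (q ν) := ⟨m, hm, hcon⟩
  -- the least such `k` is a record, hence some `q ρ`, and no `ρ` fits
  obtain ⟨hk, hkν⟩ := Nat.find_spec hex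
  have hrecord (m' : ℕ) (hm' : 0 < m') (hlt' : m' < Nat.find hex) :
      simErr d α (Nat.find hex) < simErr d α m' :=
    hkν.trans_le (not_lt.mp fun h => Nat.find_min hex hlt' ⟨hm', h⟩)
  obtain ⟨ρ, hρ⟩ := hq.2.2.2 _ hk hrecord
  rcases le_or_gt ρ ν with hρν | hρν
  · exact (hkν.trans_le (hρ ▸ hq.strictAnti.antitone hρν)).false
  · have h1 : q (ν + 1) ≤ q ρ := hq.1.monotone hρν
    have h2 : q ρ ≤ m := hρ ▸ Nat.find_min' hex ⟨hm, hcon⟩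
    omega

lemma exists_le_lt_succ (hq : IsBestApproxDenoms d α q) {m : ℕ} (hm : 0 < m) :
    ∃ ν, q ν ≤ m ∧ m < q (ν + 1) := by
  classical
  have hex : ∃ ν, m < q (ν + 1) := ⟨m, (Nat.lt_succ_self m).trans_le hq.1.le_apply⟩
  refine ⟨Nat.find hex, ?_, Nat.find_spec hex⟩
  rcases h : Nat.find hex with _ | ν
  · obtain ⟨ν, hν⟩ := hq.2.2.2 1 one_pos fun _ _ _ => by omega
    have := hq.1.monotone (Nat.zero_le ν)
    omega
  · exact not_lt.mp (Nat.find_min hex (h ▸ Nat.lt_succ_self ν))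

lemma natCast_succ_le_two_div_pow (hq : IsBestApproxDenoms d α q) {ν : ℕ}
    (hξ : 0 < simErr d α (q ν)) : (q (ν + 1) : ℝ) ≤ (2 / simErr d α (q ν)) ^ d := by
  set ξ := simErr d α (q ν)
  set K := ⌊1 / ξ⌋₊ + 1
  have hKξ : 1 / (K : ℝ) < ξ := by
    rw [div_lt_iff₀ (by positivity), ← div_lt_iff₀' hξ]
    exact_mod_cast Nat.lt_floor_add_one (1 / ξ)
  have hK2 : (K : ℝ) ≤ 2 / ξ := by
    have h1 : (1 : ℝ) ≤ 1 / ξ := by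
      rw [le_div_iff₀ hξ]; linarith [simErr_le_half d α (q ν)]
    have h2 : (⌊1 / ξ⌋₊ : ℝ) ≤ 1 / ξ := Nat.floor_le (by positivity)
    push_cast [K]
    linarith [show 2 / ξ = 1 / ξ + 1 / ξ by ring]
  obtain ⟨m, hm, hmK, hmξ⟩ := exists_simErr_le_inv d α (Nat.succ_pos _ : 0 < K)
  have hqm : q (ν + 1) ≤ m := not_lt.mp fun hlt =>
    (hmξ.trans_lt hKξ).not_ge (hq.simErr_le_of_lt_succ hm hlt)
  calc (q (ν + 1) : ℝ) ≤ m := by exact_mod_cast hqm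
    _ ≤ (K : ℝ) ^ d := by exact_mod_cast hmK
    _ ≤ (2 / ξ) ^ d := by gcongr

lemma ratio_le_of_forall_le_mul_pow (hq : IsBestApproxDenoms d α q) {c : ℝ} (hc : 0 < c)
    (h : ∀ m : ℕ, 0 < m → c ≤ m * simErr d α m ^ d) (ν : ℕ) :
    (q (ν + 1) : ℝ) / q ν ≤ 2 ^ d / c := by
  have hqν : (0 : ℝ) < q ν := by exact_mod_cast hq.2.1 ν
  have hcν := h (q ν) (hq.2.1 ν)
  have hξ : 0 < simErr d α (q ν) := by
    refine (simErr_nonneg d α _).lt_of_ne' fun h0 => ?_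
    rw [h0, zero_pow hq.dim_pos.ne', mul_zero] at hcν
    linarith
  rw [div_le_div_iff₀ hqν hc]
  calc (q (ν + 1) : ℝ) * c ≤ (2 / simErr d α (q ν)) ^ d * (q ν * simErr d α (q ν) ^ d) :=
        mul_le_mul (hq.natCast_succ_le_two_div_pow hξ) hcν hc.le (by positivity)
    _ = 2 ^ d * q ν := by
        rw [div_pow, mul_left_comm, div_mul_cancel₀ _ (pow_ne_zero _ hξ.ne'), mul_comm]

lemma le_mul_simErr_pow_of_forall (hq : IsBestApproxDenoms d α q) {c : ℝ}
    (h : ∀ ν, c ≤ q ν * simErr d α (q ν) ^ d) {m : ℕ} (hm : 0 < m) :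
    c ≤ m * simErr d α m ^ d := by
  obtain ⟨ν, hνm, hmν⟩ := hq.exists_le_lt_succ hm
  calc c ≤ q ν * simErr d α (q ν) ^ d := h ν
    _ ≤ m * simErr d α m ^ d := by
        have hξ := simErr_nonneg d α (q ν)
        exact mul_le_mul (by exact_mod_cast hνm)
          (pow_le_pow_left₀ hξ (hq.simErr_le_of_lt_succ hm hmν) d) (by positivity) (by positivity)

end IsBestApproxDenoms

lemma le_rpow_inv_mul_iff_pow_le {d : ℕ} (hd : d ≠ 0) {c x y : ℝ} (hc : 0 ≤ c) (hx : 0 ≤ x)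
    (hy : 0 ≤ y) : c ≤ x ^ ((1 : ℝ) / d) * y ↔ c ^ d ≤ x * y ^ d := by
  rw [← pow_le_pow_iff_left₀ hc (by positivity) hd, mul_pow, one_div,
    Real.rpow_inv_natCast_pow hx hd]

lemma isBadlyApprox_iff_exists_le_mul_pow {d : ℕ} (hd : d ≠ 0) (α : Fin d → ℝ) :
    IsBadlyApprox d α ↔ ∃ c : ℝ, 0 < c ∧ ∀ m : ℕ, 0 < m → c ≤ m * simErr d α m ^ d := by
  have key (c : ℝ) (hc : 0 ≤ c) (m : ℕ) :=
    le_rpow_inv_mul_iff_pow_le hd hc m.cast_nonneg (simErr_nonneg d α m)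
  constructor
  · rintro ⟨c, hc, h⟩
    exact ⟨c ^ d, by positivity, fun m hm => (key c hc.le m).1 (h m hm)⟩
  · rintro ⟨c, hc, h⟩
    refine ⟨c ^ ((1 : ℝ) / d), by positivity, fun m hm => (key _ (by positivity) m).2 ?_⟩
    rw [one_div, Real.rpow_inv_natCast_pow hc.le hd]
    exact h m hm

theorem Matrix.det_eq_of_forall_sub_mem_span_Iio {R ι : Type*} [CommRing R] [Fintype ι]
    [DecidableEq ι] [LinearOrder ι] {M N : Matrix ι ι R}
    (h : ∀ i, N.row i - M.row i ∈ Submodule.span R (M.row '' Set.Iio i)) : N.det = M.det := by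
  choose l hl hlM using fun i => (Finsupp.mem_span_image_iff_linearCombination R).1 (h i)
  let E : Matrix ι ι R := Matrix.of fun i j => l i j
  have hE : ∀ i j, i ≤ j → E i j = 0 := fun i j hij =>
    (Finsupp.mem_supported' R _).1 (hl i) j (not_lt.mpr hij)
  have hN : N = (1 + E) * M := by
    ext i k
    have := hlM i
    rw [Finsupp.linearCombination_apply, Finsupp.sum_fintype _ _ (by simp)] at this
    have := congrFun this k
    simp only [Finset.sum_apply, Pi.smul_apply, smul_eq_mul, Pi.sub_apply, Matrix.row_apply] at this
    rw [Matrix.add_mul, Matrix.one_mul, Matrix.add_apply, Matrix.mul_apply]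
    simp only [E, Matrix.of_apply]
    linear_combination -this
  have htri : (1 + E).IsLowerTriangular := fun i j (hij : i < j) => by
    simp [Matrix.one_apply_ne hij.ne, hE i j hij.le]
  rw [hN, Matrix.det_mul, Matrix.det_of_isLowerTriangular _ htri,
    Finset.prod_eq_one fun i _ => by simp [hE i i le_rfl], one_mul]

theorem Matrix.abs_det_le_of_forall_succ_zero {n : ℕ} {A : Matrix (Fin (n + 1)) (Fin (n + 1)) ℝ}
    {b : ℝ} (h0 : ∀ i : Fin n, A i.succ 0 = 0) (hb : ∀ i j : Fin n, |A i.succ j.succ| ≤ b) :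
    |A.det| ≤ |A 0 0| * (n.factorial * b ^ n) := by
  rw [Matrix.det_succ_column_zero, Fin.sum_univ_succ]
  simp only [h0, mul_zero, zero_mul, Finset.sum_const_zero, add_zero, Fin.val_zero, pow_zero,
    one_mul, abs_mul, Fin.succAbove_zero]
  gcongr
  simpa using Matrix.det_le (abv := AbsoluteValue.abs) (A := A.submatrix Fin.succ Fin.succ)
    fun i j => hb i j

lemma one_le_abs_det_of_linearIndependent {n : Type*} [Fintype n] [DecidableEq n]
    {W : Matrix n n ℤ} (h : LinearIndependent ℚ (W.map ((↑) : ℤ → ℚ)).row) :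
    (1 : ℝ) ≤ |(W.det : ℝ)| := by
  have hW : (W.det : ℚ) ≠ 0 := by
    rw [Int.cast_det]
    exact ((Matrix.isUnit_iff_isUnit_det _).1
      (Matrix.linearIndependent_rows_iff_isUnit.1 h)).ne_zero
  exact_mod_cast Int.one_le_abs (by exact_mod_cast hW)

section Flag

open Module

noncomputable def lastIndexIn {K V : Type*} [Semiring K] [AddCommMonoid V] [Module K V]
    (u : ℕ → V) (ν : ℕ) (U : Submodule K V) : ℕ :=
  sSup {μ | ν ≤ μ ∧ u μ ∈ U}

variable (K : Type*) {V : Type*} [Field K] [AddCommGroup V] [Module K V] (u : ℕ → V) (ν : ℕ)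

noncomputable def flagSpan : ℕ → Submodule K V
  | 0 => K ∙ u ν
  | i + 1 => flagSpan i ⊔ K ∙ u (lastIndexIn u ν (flagSpan i) + 1)

noncomputable def flagIndex : ℕ → ℕ
  | 0 => ν
  | i + 1 => lastIndexIn u ν (flagSpan K u ν i) + 1

variable {K u ν}

lemma flagSpan_le_iff {U : Submodule K V} {i : ℕ} :
    flagSpan K u ν i ≤ U ↔ ∀ j ≤ i, u (flagIndex K u ν j) ∈ U := by
  induction i with
  | zero => simp [flagSpan, flagIndex, Submodule.span_singleton_le_iff_mem]
  | succ i ih =>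
    rw [flagSpan, sup_le_iff, ih, Submodule.span_singleton_le_iff_mem]
    refine ⟨fun h j hj => ?_, fun h => ⟨fun j hj => h j (by omega), h (i + 1) le_rfl⟩⟩
    rcases Nat.lt_or_eq_of_le hj with hj | rfl
    exacts [h.1 j (by omega), h.2]

lemma lastIndexIn_spec {K V : Type*} [Semiring K] [AddCommMonoid V] [Module K V] {u : ℕ → V}
    {ν : ℕ} {U : Submodule K V} (hν : u ν ∈ U) (hU : BddAbove {μ | u μ ∈ U}) :
    ν ≤ lastIndexIn u ν U ∧ u (lastIndexIn u ν U) ∈ U ∧ u (lastIndexIn u ν U + 1) ∉ U := by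
  have hbdd : BddAbove {μ | ν ≤ μ ∧ u μ ∈ U} := hU.mono fun _ h => h.2
  have hne : {μ | ν ≤ μ ∧ u μ ∈ U}.Nonempty := ⟨ν, le_rfl, hν⟩
  obtain ⟨h1, h2⟩ := Nat.sSup_mem hne hbdd
  refine ⟨h1, h2, fun h => ?_⟩
  have := le_csSup hbdd ⟨h1.trans (Nat.le_succ _), h⟩
  exact Nat.not_succ_le_self _ this

variable [FiniteDimensional K V] {n : ℕ}

lemma finrank_flagSpan (hn : finrank K V = n + 1) (hν : u ν ≠ 0)
    (hbdd : ∀ U : Submodule K V, U ≠ ⊤ → BddAbove {μ | u μ ∈ U}) :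
    ∀ {i}, i ≤ n → finrank K (flagSpan K u ν i) = i + 1
  | 0, _ => finrank_span_singleton hν
  | i + 1, hi => by
    have hrank := finrank_flagSpan hn hν hbdd (i := i) (by omega)
    have hne : flagSpan K u ν i ≠ ⊤ := fun h => by rw [h, finrank_top] at hrank; omega
    have hmem : u ν ∈ flagSpan K u ν i := flagSpan_le_iff.1 le_rfl 0 (Nat.zero_le _)
    rw [flagSpan, Submodule.finrank_sup_span_singleton (lastIndexIn_spec hmem (hbdd _ hne)).2.2,
      hrank]

theorem exists_flag_of_bddAbove (hn : finrank K V = n + 1) (hν : u ν ≠ 0)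
    (hbdd : ∀ U : Submodule K V, U ≠ ⊤ → BddAbove {μ | u μ ∈ U}) :
    ∃ g : Fin (n + 1) → ℕ, g 0 = ν ∧ LinearIndependent K (u ∘ g) ∧
      ∀ s : Fin n, ∃ e, ν ≤ e ∧ g s.succ = e + 1 ∧
        u e ∈ Submodule.span K ((u ∘ g) '' Set.Iio s.succ) := by
  refine ⟨fun i => flagIndex K u ν i, rfl, ?_, fun s => ?_⟩
  · rw [linearIndependent_iff_card_eq_finrank_span, Fintype.card_fin]
    refine le_antisymm ?_ ((finrank_range_le_card _).trans_eq (Fintype.card_fin _))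
    refine (finrank_flagSpan hn hν hbdd le_rfl).symm.le.trans (Submodule.finrank_mono ?_)
    exact flagSpan_le_iff.2 fun j hj => Submodule.subset_span ⟨⟨j, by omega⟩, rfl⟩
  · have hrank := finrank_flagSpan hn hν hbdd s.is_lt.le
    have hne : flagSpan K u ν s ≠ ⊤ := fun h => by
      rw [h, finrank_top] at hrank; omega
    have hmem : u ν ∈ flagSpan K u ν s := flagSpan_le_iff.1 le_rfl 0 (Nat.zero_le _)
    obtain ⟨hνe, he, -⟩ := lastIndexIn_spec hmem (hbdd _ hne)
    refine ⟨_, hνe, rfl, flagSpan_le_iff.2 (fun j hj => ?_) he⟩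
    exact Submodule.subset_span ⟨⟨j, by omega⟩, Fin.mk_lt_mk.2 (by omega), rfl⟩

end Flag

noncomputable def approxVec {d : ℕ} (α : Fin d → ℝ) (m : ℕ) : Fin (d + 1) → ℤ :=
  Fin.cons (m : ℤ) fun j => round ((m : ℝ) * α j)

section approxVec

variable {d : ℕ} {α : Fin d → ℝ}

lemma approxVec_zero (m : ℕ) : approxVec α m 0 = m := rfl

lemma abs_mul_sub_approxVec_le (m : ℕ) (k : Fin (d + 1)) :
    |(m : ℝ) * (Fin.cons 1 α : Fin (d + 1) → ℝ) k - approxVec α m k| ≤ simErr d α m := by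
  cases k using Fin.cases with
  | zero => simpa [approxVec_zero] using simErr_nonneg d α m
  | succ j => simpa [approxVec, dist01] using dist01_le_simErr d α m j

lemma abs_approxVec_sub_mul_le {m m' : ℕ} {c : ℝ} (hc : 0 ≤ c) (h : (m' : ℝ) = c * m)
    (k : Fin (d + 1)) :
    |(approxVec α m' k : ℝ) - c * approxVec α m k| ≤ simErr d α m' + c * simErr d α m := by
  set a : Fin (d + 1) → ℝ := Fin.cons 1 α
  calc |(approxVec α m' k : ℝ) - c * approxVec α m k|
      = |c * (m * a k - approxVec α m k) - (m' * a k - approxVec α m' k)| := by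
        rw [h]; congr 1; ring
    _ ≤ |c * (m * a k - approxVec α m k)| + |m' * a k - approxVec α m' k| := abs_sub _ _
    _ = c * |m * a k - approxVec α m k| + |m' * a k - approxVec α m' k| := by
        rw [abs_mul, abs_of_nonneg hc]
    _ ≤ c * simErr d α m + simErr d α m' := by
        gcongr <;> exact abs_mul_sub_approxVec_le _ k
    _ = simErr d α m' + c * simErr d α m := add_comm _ _

lemma sum_mul_cons_ne_zero (hli : LinearIndependent ℚ (Fin.cons 1 α : Fin (d + 1) → ℝ))
    {n : Fin (d + 1) → ℚ} (hn : n ≠ 0) :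
    ∑ k, (n k : ℝ) * (Fin.cons 1 α : Fin (d + 1) → ℝ) k ≠ 0 := fun h =>
  hn <| funext <| Fintype.linearIndependent_iff.1 hli n <| by simpa [Rat.smul_def] using h

lemma natCast_mul_abs_le_of_sum_mul_approxVec_eq_zero {n : Fin (d + 1) → ℚ} {m : ℕ}
    (h : ∑ k, n k * approxVec α m k = 0) :
    (m : ℝ) * |∑ k, (n k : ℝ) * (Fin.cons 1 α : Fin (d + 1) → ℝ) k|
      ≤ (∑ k, |(n k : ℝ)|) * simErr d α m := by
  set a : Fin (d + 1) → ℝ := Fin.cons 1 α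
  have h' : ∑ k, (n k : ℝ) * approxVec α m k = 0 := by exact_mod_cast h
  calc (m : ℝ) * |∑ k, (n k : ℝ) * a k|
      = |∑ k, (n k : ℝ) * (m * a k - approxVec α m k)| := by
        conv_lhs => rw [← Nat.abs_cast m, ← abs_mul]
        simp only [mul_sub, Finset.sum_sub_distrib, h', sub_zero, Finset.mul_sum]
        ring_nf
    _ ≤ ∑ k, |(n k : ℝ)| * simErr d α m := by
        refine (Finset.abs_sum_le_sum_abs _ _).trans (Finset.sum_le_sum fun k _ => ?_)
        rw [abs_mul]
        exact mul_le_mul_of_nonneg_left (abs_mul_sub_approxVec_le m k) (abs_nonneg _)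
    _ = (∑ k, |(n k : ℝ)|) * simErr d α m := Finset.sum_mul _ _ _ |>.symm

/-- A nonzero rational form vanishing on `U` takes a nonzero value `L` at `(1, α)`, and
`m |L|` is bounded on the points of `U`. -/
lemma bddAbove_setOf_approxVec_mem (hli : LinearIndependent ℚ (Fin.cons 1 α : Fin (d + 1) → ℝ))
    {U : Submodule ℚ (Fin (d + 1) → ℚ)} (hU : U ≠ ⊤) :
    BddAbove {m : ℕ | (fun k => (approxVec α m k : ℚ)) ∈ U} := by
  classical
  obtain ⟨f, hf, hUf⟩ := U.exists_le_ker_of_lt_top hU.lt_top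
  set n : Fin (d + 1) → ℚ := fun k => f fun j => if k = j then 1 else 0
  have hfn (x : Fin (d + 1) → ℚ) : f x = ∑ k, n k * x k := by
    rw [LinearMap.pi_apply_eq_sum_univ f x]
    simp [n, mul_comm]
  have hn : n ≠ 0 := fun h0 => hf <| LinearMap.ext fun x => by simp [hfn, h0]
  have hL := abs_pos.2 (sum_mul_cons_ne_zero hli hn)
  refine ⟨⌊(∑ k, |(n k : ℝ)|) / 2 / |∑ k, (n k : ℝ) * (Fin.cons 1 α : Fin (d + 1) → ℝ) k|⌋₊,
    fun m hm => Nat.le_floor ?_⟩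
  rw [le_div_iff₀ hL]
  have h0 : ∑ k, n k * approxVec α m k = 0 := by
    rw [← hfn]; exact hUf hm
  calc (m : ℝ) * |_| ≤ (∑ k, |(n k : ℝ)|) * simErr d α m :=
        natCast_mul_abs_le_of_sum_mul_approxVec_eq_zero h0
    _ ≤ (∑ k, |(n k : ℝ)|) / 2 := by
        rw [div_eq_mul_one_div]
        exact mul_le_mul_of_nonneg_left (simErr_le_half d α m) (by positivity)

end approxVec

namespace IsBestApproxDenoms

variable {d : ℕ} {α : Fin d → ℝ} {q : ℕ → ℕ}

lemma exists_flag (hli : LinearIndependent ℚ (Fin.cons 1 α : Fin (d + 1) → ℝ))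
    (hq : IsBestApproxDenoms d α q) (ν : ℕ) :
    ∃ g : Fin (d + 1) → ℕ, g 0 = ν ∧
      LinearIndependent ℚ (fun i k => (approxVec α (q (g i)) k : ℚ)) ∧
      ∀ s : Fin d, ∃ e, ν ≤ e ∧ g s.succ = e + 1 ∧ (fun k => (approxVec α (q e) k : ℚ)) ∈
        Submodule.span ℚ ((fun i k => (approxVec α (q (g i)) k : ℚ)) '' Set.Iio s.succ) := by
  set u : ℕ → Fin (d + 1) → ℚ := fun μ k => approxVec α (q μ) k
  have hu : u ν ≠ 0 := fun h => (hq.2.1 ν).ne' <| by simpa [u, approxVec_zero] using congrFun h 0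
  have hbdd (U : Submodule ℚ (Fin (d + 1) → ℚ)) (hU : U ≠ ⊤) : BddAbove {μ | u μ ∈ U} :=
    let ⟨b, hb⟩ := bddAbove_setOf_approxVec_mem hli hU
    ⟨b, fun μ hμ => hq.1.le_apply.trans (hb hμ)⟩
  exact exists_flag_of_bddAbove (Module.finrank_fin_fun ℚ) hu hbdd

lemma abs_approxVec_succ_sub_le (hq : IsBestApproxDenoms d α q) {C : ℝ}
    (hC : ∀ ν, (q (ν + 1) : ℝ) / q ν ≤ C) {ν μ : ℕ} (hνμ : ν ≤ μ) (k : Fin (d + 1)) :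
    |(approxVec α (q (μ + 1)) k : ℝ) - q (μ + 1) / q μ * approxVec α (q μ) k|
      ≤ (C + 1) * simErr d α (q ν) := by
  have hqμ : (0 : ℝ) < q μ := by exact_mod_cast hq.2.1 μ
  have hc0 : (0 : ℝ) ≤ q (μ + 1) / q μ := by positivity
  calc _ ≤ simErr d α (q (μ + 1)) + q (μ + 1) / q μ * simErr d α (q μ) :=
        abs_approxVec_sub_mul_le hc0 (div_mul_cancel₀ _ hqμ.ne').symm k
    _ ≤ simErr d α (q ν) + C * simErr d α (q ν) :=
        add_le_add (hq.strictAnti.antitone (hνμ.trans (Nat.le_succ μ)))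
          (mul_le_mul (hC μ) (hq.strictAnti.antitone hνμ) (simErr_nonneg d α _)
            (hc0.trans (hC μ)))
    _ = (C + 1) * simErr d α (q ν) := by ring

theorem one_le_mul_factorial_mul_pow (hli : LinearIndependent ℚ (Fin.cons 1 α : Fin (d + 1) → ℝ))
    (hq : IsBestApproxDenoms d α q) {C : ℝ} (hC : ∀ ν, (q (ν + 1) : ℝ) / q ν ≤ C) (ν : ℕ) :
    1 ≤ q ν * (d.factorial * ((C + 1) * simErr d α (q ν)) ^ d) := by
  set u : ℕ → Fin (d + 1) → ℚ := fun μ k => approxVec α (q μ) k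
  obtain ⟨g, hg0, hind, hstep⟩ := hq.exists_flag hli ν
  choose e hνe hge he using hstep
  set c : Fin d → ℚ := fun s => q (e s + 1) / q (e s)
  set W : Matrix (Fin (d + 1)) (Fin (d + 1)) ℤ := Matrix.of fun i => approxVec α (q (g i))
  set N : Matrix (Fin (d + 1)) (Fin (d + 1)) ℚ :=
    Matrix.of fun i => u (g i) - Fin.cases 0 (fun s => c s • u (e s)) i
  have hNW : N.det = W.det := by
    rw [Int.cast_det]
    refine Matrix.det_eq_of_forall_sub_mem_span_Iio fun i => ?_
    rw [show (W.map ((↑) : ℤ → ℚ)).row = u ∘ g from rfl]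
    cases i using Fin.cases with
    | zero =>
      show u (g 0) - 0 - u (g 0) ∈ _
      simp
    | succ s =>
      show u (g s.succ) - c s • u (e s) - u (g s.succ) ∈ _
      simpa using Submodule.neg_mem _ (Submodule.smul_mem _ (c s) (he s))
  have hrow (s : Fin d) (k : Fin (d + 1)) : (N.map ((↑) : ℚ → ℝ)) s.succ k =
      (approxVec α (q (e s + 1)) k : ℝ) - q (e s + 1) / q (e s) * approxVec α (q (e s)) k := by
    simp [N, u, c, hge]
  have hN : |((N.det : ℚ) : ℝ)| ≤ q ν * (d.factorial * ((C + 1) * simErr d α (q ν)) ^ d) := by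
    rw [Rat.cast_det]
    refine (Matrix.abs_det_le_of_forall_succ_zero (fun s => ?_)
      (fun s j => (hrow s j.succ).symm ▸ hq.abs_approxVec_succ_sub_le hC (hνe s) _)).trans_eq ?_
    · have hqe : (q (e s) : ℝ) ≠ 0 := by exact_mod_cast (hq.2.1 (e s)).ne'
      rw [hrow, approxVec_zero, approxVec_zero, Int.cast_natCast, Int.cast_natCast,
        div_mul_cancel₀ _ hqe, sub_self]
    · simp [N, u, hg0, approxVec_zero]
  calc (1 : ℝ) ≤ |(W.det : ℝ)| := one_le_abs_det_of_linearIndependent hind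
    _ = |((N.det : ℚ) : ℝ)| := by rw [hNW, Rat.cast_intCast]
    _ ≤ _ := hN

end IsBestApproxDenoms

theorem badly_approx_iff_sup_ratio_denoms_finite
    (d : ℕ) (α : Fin d → ℝ)
    (hli : LinearIndependent ℚ (Fin.cons 1 α : Fin (d + 1) → ℝ))
    (q : ℕ → ℕ) (hq : IsBestApproxDenoms d α q) :
    IsBadlyApprox d α ↔ ∃ C : ℝ, ∀ ν : ℕ, (q (ν + 1) : ℝ) / (q ν : ℝ) ≤ C := by
  rw [isBadlyApprox_iff_exists_le_mul_pow hq.dim_pos.ne' α]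
  constructor
  · rintro ⟨c, hc, h⟩
    exact ⟨2 ^ d / c, hq.ratio_le_of_forall_le_mul_pow hc h⟩
  · rintro ⟨C, hC⟩
    have hC0 : 0 ≤ C := (div_nonneg (Nat.cast_nonneg _) (Nat.cast_nonneg _)).trans (hC 0)
    refine ⟨1 / (d.factorial * (C + 1) ^ d), by positivity,
      fun m hm => hq.le_mul_simErr_pow_of_forall (fun ν => ?_) hm⟩
    rw [div_le_iff₀ (by positivity)]
    calc 1 ≤ q ν * (d.factorial * ((C + 1) * simErr d α (q ν)) ^ d) :=
          hq.one_le_mul_factorial_mul_pow hli hC ν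
      _ = _ := by rw [mul_pow]; ring
end

section
/- If α∈ℝ^d is badly approximable (with 1,α₁,…,α_d linearly independent over ℚ), then sup_{j≥1} M_{j+1}/M_j < ∞, where M_ν are the heights of the best approximation vectors of α in the sense of the linear form. -/
section MinkowskiForms

open MeasureTheory Module Submodule

/-- Minkowski's theorem for linear forms. -/
theorem mink_forms (n : ℕ) (M : Matrix (Fin n) (Fin n) ℝ) (hdet : M.det ≠ 0)
    (b : Fin n → ℝ) (hb : ∀ i, 0 < b i) (hvol : |M.det| < ∏ i, b i) :
    ∃ x : Fin n → ℤ, x ≠ 0 ∧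
      ∀ i, |M.mulVec (fun k => (x k : ℝ)) i| ≤ b i := by
  classical
  set f : (Fin n → ℝ) →ₗ[ℝ] (Fin n → ℝ) := Matrix.toLin' M with hf
  have hfdet : LinearMap.det f ≠ 0 := by rwa [hf, LinearMap.det_toLin']
  set s : Set (Fin n → ℝ) := f ⁻¹' (Set.univ.pi fun i => Set.Icc (-b i) (b i)) with hs
  have h_symm : ∀ x ∈ s, -x ∈ s := by
    intro x hx
    simp only [hs, Set.mem_preimage, Set.mem_pi, Set.mem_univ, forall_true_left,
      Set.mem_Icc, map_neg] at hx ⊢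
    intro i
    have := hx i
    constructor <;> simp only [Pi.neg_apply] <;> linarith [this.1, this.2]
  have h_conv : Convex ℝ s :=
    (convex_pi fun i _ => convex_Icc _ _).linear_preimage f
  haveI : Countable (span ℤ (Set.range (Pi.basisFun ℝ (Fin n)))).toAddSubgroup := by
    change Countable (span ℤ (Set.range (Pi.basisFun ℝ (Fin n))))
    infer_instance
  have fund := ZSpan.isAddFundamentalDomain' (Pi.basisFun ℝ (Fin n))
    (volume : Measure (Fin n → ℝ))
  have hF : volume (ZSpan.fundamentalDomain (Pi.basisFun ℝ (Fin n))) = 1 := by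
    rw [ZSpan.fundamentalDomain_pi_basisFun, volume_pi]
    simp [Measure.pi_pi]
  have hμs : volume s = ENNReal.ofReal (|M.det|⁻¹ * ∏ i, (2 * b i)) := by
    rw [hs, Measure.addHaar_preimage_linearMap volume hfdet]
    have hbox : volume (Set.univ.pi fun i => Set.Icc (-b i) (b i))
        = ENNReal.ofReal (∏ i, (2 * b i)) := by
      rw [volume_pi, Measure.pi_pi]
      rw [ENNReal.ofReal_prod_of_nonneg (fun i _ => by have := hb i; positivity)]
      congr 1; ext i
      rw [Real.volume_Icc]; congr 1; ring
    rw [hbox, ← ENNReal.ofReal_mul (by positivity)]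
    congr 2
    rw [hf, LinearMap.det_toLin', abs_inv]
  have hlt : volume (ZSpan.fundamentalDomain (Pi.basisFun ℝ (Fin n))) * 2 ^ finrank ℝ (Fin n → ℝ)
      < volume s := by
    rw [hF, one_mul, hμs]
    have h2 : (2 : ENNReal) ^ finrank ℝ (Fin n → ℝ) = ENNReal.ofReal (2 ^ n) := by
      rw [finrank_fin_fun]
      rw [ENNReal.ofReal_pow (by norm_num)]
      norm_num
    have hbp : (0:ℝ) < ∏ i, b i := Finset.prod_pos fun i _ => hb i
    rw [h2, ENNReal.ofReal_lt_ofReal_iff]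
    · have hprod : ∏ i, (2 * b i) = 2 ^ n * ∏ i, b i := by
        rw [Finset.prod_mul_distrib]; simp
      rw [hprod]
      have habs : 0 < |M.det| := abs_pos.mpr hdet
      rw [← mul_assoc]
      calc (2:ℝ) ^ n = |M.det|⁻¹ * 2 ^ n * |M.det| := by field_simp
      _ < |M.det|⁻¹ * 2 ^ n * ∏ i, b i :=
          mul_lt_mul_of_pos_left hvol (by positivity)
    · have habs : 0 < |M.det| := abs_pos.mpr hdet
      have : (0:ℝ) < ∏ i, (2 * b i) :=
        Finset.prod_pos fun i _ => by have := hb i; positivity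
      positivity
  obtain ⟨x, hx0, hxs⟩ :=
    exists_ne_zero_mem_lattice_of_measure_mul_two_pow_lt_measure fund h_symm h_conv hlt
  have hcoord : ∀ i, ∃ z : ℤ, (z : ℝ) = (x : Fin n → ℝ) i := by
    intro i
    obtain ⟨z, hz⟩ :=
      ((Pi.basisFun ℝ (Fin n)).mem_span_iff_repr_mem ℤ (x : Fin n → ℝ)).mp x.2 i
    exact ⟨z, by simpa using hz⟩
  choose g hg using hcoord
  refine ⟨g, ?_, ?_⟩
  · intro hgz
    apply hx0
    have hxe : (x : Fin n → ℝ) = 0 := by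
      funext i; rw [← hg i, hgz]; simp
    exact ZeroMemClass.coe_eq_zero.mp hxe
  · intro i
    have hmem := hxs
    simp only [hs, Set.mem_preimage, Set.mem_pi, Set.mem_univ, forall_true_left,
      Set.mem_Icc] at hmem
    have hmi := hmem i
    have hfx : f (x : Fin n → ℝ) = M.mulVec (fun k => (g k : ℝ)) := by
      have hge : (fun k => (g k : ℝ)) = (x : Fin n → ℝ) := funext hg
      rw [hge, hf]
      simp [Matrix.toLin'_apply]
    rw [hfx] at hmi
    exact abs_le.mpr hmi

end MinkowskiForms

/-- Height `M = max_{1 ≤ j ≤ d} |m_j|` of an integer vector `(m_0, m_1, …, m_d)`. -/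
def lfHeight (d : ℕ) (m : Fin (d + 1) → ℤ) : ℕ :=
  Finset.univ.sup fun j : Fin d => (m j.succ).natAbs

/-- Value `L = |m_0 + m_1 α_1 + ⋯ + m_d α_d|` of the linear form at `(m_0, m_1, …, m_d)`. -/
noncomputable def lfValue (d : ℕ) (α : Fin d → ℝ) (m : Fin (d + 1) → ℤ) : ℝ :=
  |(m 0 : ℝ) + ∑ j : Fin d, (m j.succ : ℝ) * α j|

/-- `m` enumerates the best approximation vectors of `α` in the sense of the linear form. -/
def IsLinFormBestApprox (d : ℕ) (α : Fin d → ℝ) (m : ℕ → Fin (d + 1) → ℤ) : Prop :=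
  StrictMono (fun ν => lfHeight d (m ν)) ∧
  StrictAnti (fun ν => lfValue d α (m ν)) ∧
  (∀ ν, ∀ nv : Fin d → ℤ, nv ≠ 0 →
      (Finset.univ.sup fun j => (nv j).natAbs) < lfHeight d (m ν) →
      lfValue d α (m ν) < dist01 (∑ j : Fin d, (nv j : ℝ) * α j)) ∧
  (∀ nv : Fin (d + 1) → ℤ, (fun j : Fin d => nv j.succ) ≠ 0 →
      ∃ ν, lfHeight d (m ν) ≤ lfHeight d nv ∧ lfValue d α (m ν) ≤ lfValue d α nv)


lemma dist01_nonneg (x : ℝ) : 0 ≤ dist01 x := abs_nonneg _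

lemma dist01_le_int (x : ℝ) (k : ℤ) : dist01 x ≤ |x - (k : ℝ)| := by
  rcases eq_or_ne k (round x) with rfl | hk
  · exact le_refl _
  · have h1 : |x - (round x : ℝ)| ≤ 1 / 2 := abs_sub_round x
    have h2 : (1 : ℝ) ≤ |(round x : ℝ) - (k : ℝ)| := by
      have : (1 : ℤ) ≤ |round x - k| := Int.one_le_abs (sub_ne_zero.mpr (Ne.symm hk))
      calc (1:ℝ) = ((1:ℤ):ℝ) := by norm_num
      _ ≤ (|round x - k| : ℤ) := by exact_mod_cast this
      _ = |(round x : ℝ) - (k : ℝ)| := by push_cast [Int.cast_abs]; ring_nf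
    have h3 : |(round x : ℝ) - k| ≤ |(round x:ℝ) - x| + |x - k| := abs_sub_le _ _ _
    have h4 : |(round x : ℝ) - x| = |x - (round x : ℝ)| := abs_sub_comm _ _
    unfold dist01
    linarith

lemma dist01_neg (x : ℝ) : dist01 (-x) = dist01 x := by
  apply le_antisymm
  · have := dist01_le_int (-x) (-(round x))
    simpa [dist01, abs_sub_comm, neg_add_eq_sub] using
      le_trans this (by rw [Int.cast_neg, sub_neg_eq_add]; rw [show -x + (round x:ℝ) = -(x - round x) by ring, abs_neg])
  · have := dist01_le_int x (-(round (-x)))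
    refine le_trans this ?_
    rw [Int.cast_neg, sub_neg_eq_add, show x + (round (-x):ℝ) = -(-x - round (-x)) by ring, abs_neg]
    exact le_refl _

lemma dist01_half (x : ℝ) : dist01 x ≤ 1 / 2 := abs_sub_round x

lemma dist01_pos_of_li (d : ℕ) (α : Fin d → ℝ)
    (hli : LinearIndependent ℚ (Fin.cons 1 α : Fin (d + 1) → ℝ))
    (nv : Fin d → ℤ) (hnv : nv ≠ 0) :
    0 < dist01 (∑ j : Fin d, (nv j : ℝ) * α j) := by
  rcases lt_or_eq_of_le (dist01_nonneg (∑ j : Fin d, (nv j : ℝ) * α j)) with h | h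
  · exact h
  exfalso
  set S := ∑ j : Fin d, (nv j : ℝ) * α j with hS
  have hround : S = (round S : ℝ) := by
    have := h.symm
    unfold dist01 at this
    have := abs_eq_zero.mp this
    linarith [sub_eq_zero.mp this]
  set g : Fin (d + 1) → ℚ := Fin.cons (-(round S : ℚ)) (fun j => (nv j : ℚ)) with hg
  have hsum : ∑ i, g i • (Fin.cons 1 α : Fin (d + 1) → ℝ) i = 0 := by
    rw [Fin.sum_univ_succ]
    simp only [hg, Fin.cons_zero, Fin.cons_succ]
    have : ∀ j : Fin d, ((nv j : ℚ)) • α j = (nv j : ℝ) * α j := by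
      intro j; rw [Rat.smul_def]; norm_num
    rw [Finset.sum_congr rfl fun j _ => this j]
    rw [Rat.smul_def]
    push_cast
    rw [← hS, ← hround]
    ring
  have := (Fintype.linearIndependent_iff.mp hli) g hsum
  apply hnv
  funext j
  have := this j.succ
  simp only [hg, Fin.cons_succ] at this
  exact_mod_cast this

lemma dirichlet_lf (d : ℕ) (hd : 0 < d) (α : Fin d → ℝ) (Q : ℕ) (hQ : 2 ≤ Q) :
    ∃ nvec : Fin (d + 1) → ℤ, (fun j : Fin d => nvec j.succ) ≠ 0 ∧
      lfHeight d nvec ≤ Q ∧ lfValue d α nvec ≤ (3 / 2) / (Q : ℝ) ^ d := by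
  classical
  have hQ0 : (0:ℝ) < (Q:ℝ) := by positivity -- Q ≥ 2
  have hQR : (2:ℝ) ≤ (Q:ℝ) := by exact_mod_cast hQ
  have hQd2 : (2:ℝ) ≤ (Q:ℝ) ^ d := by
    calc (2:ℝ) = 2 ^ 1 := by norm_num
    _ ≤ 2 ^ d := pow_le_pow_right₀ (by norm_num) hd
    _ ≤ (Q:ℝ) ^ d := pow_le_pow_left₀ (by norm_num) hQR d
  have hQd0 : (0:ℝ) < (Q:ℝ) ^ d := by positivity
  set M : Matrix (Fin (d+1)) (Fin (d+1)) ℝ :=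
    Matrix.of (Fin.cons (Fin.cons 1 α)
      (fun j : Fin d => fun k => if k = j.succ then 1 else 0)) with hM
  have hMdiag0 : M 0 0 = 1 := by simp [hM]
  have hMtri : M.BlockTriangular id := by
    intro i k hik
    simp only [id] at hik
    rcases Fin.eq_zero_or_eq_succ i with rfl | ⟨j, rfl⟩
    · exact absurd hik (by simp)
    · have hk : k ≠ j.succ := ne_of_lt hik
      simp [hM, Matrix.of_apply, Fin.cons_succ, hk]
  have hdet : M.det = 1 := by
    rw [Matrix.det_of_upperTriangular hMtri]
    rw [Fin.prod_univ_succ]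
    simp [hM]
  set b : Fin (d+1) → ℝ := Fin.cons ((3/2) / (Q:ℝ)^d) (fun _ => (Q:ℝ)) with hb
  have hbpos : ∀ i, 0 < b i := by
    refine Fin.cases ?_ ?_
    · simp only [hb, Fin.cons_zero]; positivity
    · intro j; simp only [hb, Fin.cons_succ]; positivity
  have hvol : |M.det| < ∏ i, b i := by
    rw [hdet, abs_one, hb, Fin.prod_univ_succ]
    simp only [Fin.cons_zero, Fin.cons_succ, Finset.prod_const, Finset.card_univ,
      Fintype.card_fin]
    rw [div_mul_cancel₀ _ (ne_of_gt hQd0)]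
    norm_num
  obtain ⟨x, hx0, hxb⟩ := mink_forms (d+1) M (by rw [hdet]; norm_num) b hbpos hvol
  set v : Fin (d+1) → ℝ := fun k => (x k : ℝ) with hv
  have hrow0 : M.mulVec v 0 = v 0 + ∑ j, α j * v j.succ := by
    simp [Matrix.mulVec, dotProduct, hM, Fin.sum_univ_succ]
  have hrowj : ∀ j : Fin d, M.mulVec v j.succ = v j.succ := by
    intro j
    simp [Matrix.mulVec, dotProduct, hM, ite_mul, Finset.sum_ite_eq']
  have hval : lfValue d α x ≤ (3/2) / (Q:ℝ)^d := by
    have h0 := hxb 0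
    rw [hrow0] at h0
    simp only [hb, Fin.cons_zero] at h0
    unfold lfValue
    have : (x 0 : ℝ) + ∑ j, (x j.succ : ℝ) * α j = v 0 + ∑ j, α j * v j.succ := by
      simp only [hv]
      congr 1
      exact Finset.sum_congr rfl fun j _ => mul_comm _ _
    rw [this]
    exact h0
  have hhj : ∀ j : Fin d, (x j.succ).natAbs ≤ Q := by
    intro j
    have h := hxb j.succ
    rw [hrowj j] at h
    simp only [hb, Fin.cons_succ] at h
    have : |(x j.succ : ℝ)| ≤ (Q : ℝ) := h
    rw [← Int.cast_abs] at this
    have h2 : |x j.succ| ≤ (Q : ℤ) := by exact_mod_cast this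
    rw [Int.abs_eq_natAbs] at h2
    exact_mod_cast h2
  have hheight : lfHeight d x ≤ Q := Finset.sup_le fun j _ => hhj j
  refine ⟨x, ?_, hheight, hval⟩
  intro htail
  have hx00 : x 0 ≠ 0 := by
    intro h00
    apply hx0
    funext i
    rcases Fin.eq_zero_or_eq_succ i with rfl | ⟨j, rfl⟩
    · exact h00
    · exact congrFun htail j
  have h1 : (1:ℝ) ≤ |(x 0 : ℝ)| := by
    have := Int.one_le_abs hx00
    rw [← Int.cast_abs]
    exact_mod_cast this
  have h2 : |(x 0 : ℝ)| ≤ (3/2) / (Q:ℝ)^d := by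
    have h0 := hxb 0
    rw [hrow0] at h0
    simp only [hb, Fin.cons_zero] at h0
    have : v 0 + ∑ j, α j * v j.succ = (x 0 : ℝ) := by
      simp only [hv]
      rw [show ∑ j, α j * ((x j.succ : ℤ):ℝ) = 0 from ?_]
      · ring
      · refine Finset.sum_eq_zero fun j _ => ?_
        rw [congrFun htail j]
        simp
    rwa [this] at h0
  have h3 : (3/2) / (Q:ℝ)^d ≤ 3/4 := by
    rw [div_le_iff₀ hQd0]; nlinarith
  linarith

set_option maxHeartbeats 1000000 in
/-- Transference: simultaneous badness gives linear-form badness. -/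
lemma transfer_lf (d : ℕ) (hd : 0 < d) (α : Fin d → ℝ) (c : ℝ) (hc : 0 < c)
    (hbadc : ∀ q : ℕ, 0 < q → c ≤ (q : ℝ) ^ ((1 : ℝ) / d) * simErr d α q)
    (nv : Fin d → ℤ) (hnv : nv ≠ 0)
    (hpos : 0 < dist01 (∑ j : Fin d, (nv j : ℝ) * α j)) :
    min (1/2) ((c ^ d / (2 * d)) ^ d / 2) / ((Finset.univ.sup fun j => (nv j).natAbs : ℕ) : ℝ) ^ d
      ≤ dist01 (∑ j : Fin d, (nv j : ℝ) * α j) := by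
  classical
  haveI : NeZero d := ⟨by omega⟩
  set N : ℕ := Finset.univ.sup fun j => (nv j).natAbs with hN
  have hN1 : 1 ≤ N := by
    obtain ⟨j, hj⟩ : ∃ j, nv j ≠ 0 := by
      by_contra h
      push_neg at h
      exact hnv (funext h)
    have : 1 ≤ (nv j).natAbs := Int.natAbs_pos.mpr hj
    exact le_trans this (Finset.le_sup (f := fun j => (nv j).natAbs) (Finset.mem_univ j))
  have hNR : (1:ℝ) ≤ (N:ℝ) := by exact_mod_cast hN1
  have hNd1 : (1:ℝ) ≤ (N:ℝ)^d := one_le_pow₀ hNR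
  set S : ℝ := ∑ j : Fin d, (nv j : ℝ) * α j with hS
  set δ : ℝ := dist01 S with hδ
  set c' : ℝ := min (1/2) ((c ^ d / (2 * d)) ^ d / 2) with hc'
  have hc'0 : 0 ≤ c' := le_min (by norm_num) (by positivity)
  rcases le_or_gt (1/2 : ℝ) δ with hbig | hsmall
  · refine le_trans ?_ hbig
    refine le_trans (div_le_self hc'0 hNd1) (min_le_left _ _)
  -- main case : δ < 1/2
  set Y : ℝ := (2 * δ) ^ ((1:ℝ)/d) with hY
  have h2δ0 : 0 < 2 * δ := by linarith
  have h2δ1 : 2 * δ < 1 := by linarith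
  have hY0 : 0 < Y := Real.rpow_pos_of_pos h2δ0 _
  have hY1 : Y < 1 := Real.rpow_lt_one (le_of_lt h2δ0) h2δ1 (by positivity)
  have hYd : Y ^ d = 2 * δ := by
    rw [hY, ← Real.rpow_natCast ((2*δ) ^ ((1:ℝ)/d)) d, ← Real.rpow_mul (le_of_lt h2δ0)]
    rw [one_div, inv_mul_cancel₀ (by exact_mod_cast (ne_of_gt hd) : (d:ℝ) ≠ 0), Real.rpow_one]
  set n0 : ℤ := -round S with hn0
  set η : ℝ := (n0 : ℝ) + S with hη
  have hηδ : |η| = δ := by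
    rw [hη, hn0, hδ]
    unfold dist01
    push_cast
    ring_nf
  have hδ0 : δ ≠ 0 := ne_of_gt hpos
  -- matrices
  set M1 : Matrix (Fin (d+1)) (Fin (d+1)) ℝ :=
    Matrix.of (Fin.cons (fun k => if k = 0 then 1 else 0)
      (fun j : Fin d => fun k => if k = 0 then α j else if k = j.succ then -1 else 0)) with hM1
  set M2 : Matrix (Fin (d+1)) (Fin (d+1)) ℝ :=
    Matrix.of (Fin.cons (Fin.cons η (fun j => -(nv j : ℝ)))
      (fun j : Fin d => fun k => if k = j.succ then 1 else 0)) with hM2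
  have hM1tri : M1.BlockTriangular OrderDual.toDual := by
    intro i k hik
    have hik' : (i : Fin (d+1)) < k := hik
    have hk0 : k ≠ 0 := by rintro rfl; simp at hik'
    rcases Fin.eq_zero_or_eq_succ i with rfl | ⟨j, rfl⟩
    · simp [hM1, hk0]
    · have hkj : k ≠ j.succ := (ne_of_lt hik').symm
      simp [hM1, hk0, hkj]
  have hM2tri : M2.BlockTriangular id := by
    intro i k hik
    simp only [id] at hik
    rcases Fin.eq_zero_or_eq_succ i with rfl | ⟨j, rfl⟩
    · exact absurd hik (by simp)
    · have hk : k ≠ j.succ := ne_of_lt hik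
      simp [hM2, hk]
  have hdet1 : M1.det = (-1)^d := by
    rw [Matrix.det_of_lowerTriangular M1 hM1tri, Fin.prod_univ_succ]
    simp [hM1, Fin.succ_ne_zero]
  have hdet2 : M2.det = η := by
    rw [Matrix.det_of_upperTriangular hM2tri, Fin.prod_univ_succ]
    simp [hM2]
  set M : Matrix (Fin (d+1)) (Fin (d+1)) ℝ := M2 * M1 with hM
  have hdet : |M.det| = δ := by
    rw [hM, Matrix.det_mul, hdet1, hdet2, abs_mul, abs_pow, abs_neg, abs_one, one_pow,
      mul_one, hηδ]
  set b : Fin (d+1) → ℝ := Fin.cons (3/4) (fun _ => Y) with hb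
  have hbpos : ∀ i, 0 < b i := by
    refine Fin.cases ?_ ?_
    · simp only [hb, Fin.cons_zero]; norm_num
    · intro j; simp only [hb, Fin.cons_succ]; exact hY0
  have hvol : |M.det| < ∏ i, b i := by
    rw [hdet, hb, Fin.prod_univ_succ]
    simp only [Fin.cons_zero, Fin.cons_succ, Finset.prod_const, Finset.card_univ,
      Fintype.card_fin]
    rw [hYd]
    linarith
  obtain ⟨x, hx0, hxb⟩ := mink_forms (d+1) M
    (fun h => by rw [h] at hdet; simp at hdet; exact hδ0 hdet.symm) b hbpos hvol
  set v : Fin (d+1) → ℝ := fun k => (x k : ℝ) with hv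
  set y : Fin (d+1) → ℝ := M1.mulVec v with hy
  have hy0 : y 0 = v 0 := by
    simp [hy, hM1, Matrix.mulVec, dotProduct, ite_mul, Finset.sum_ite_eq']
  have hyj : ∀ j : Fin d, y j.succ = α j * v 0 - v j.succ := by
    intro j
    simp only [hy, hM1, Matrix.mulVec, dotProduct, Matrix.of_apply, Fin.cons_succ]
    rw [Fin.sum_univ_succ]
    simp [Fin.succ_ne_zero, Fin.succ_inj, ite_mul, Finset.sum_ite_eq', sub_eq_add_neg]
  have hMv : M.mulVec v = M2.mulVec y := by rw [hM, hy, Matrix.mulVec_mulVec]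
  have hrow0 : M.mulVec v 0 = η * v 0 + ∑ j, (-(nv j : ℝ)) * (α j * v 0 - v j.succ) := by
    rw [hMv]
    simp only [Matrix.mulVec, dotProduct, hM2, Matrix.of_apply]
    rw [Fin.sum_univ_succ]
    simp only [Fin.cons_zero, Fin.cons_succ]
    rw [hy0]
    simp only [hyj]
  have hrowj : ∀ j : Fin d, M.mulVec v j.succ = α j * v 0 - v j.succ := by
    intro j
    rw [hMv]
    simp only [Matrix.mulVec, dotProduct, hM2, Matrix.of_apply, Fin.cons_succ,
      ite_mul, one_mul, zero_mul]
    rw [Finset.sum_ite_eq' Finset.univ j.succ]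
    simp [hyj j]
  haveI : Nonempty (Fin d) := Fin.pos_iff_nonempty.mp hd
  -- row 0 is an integer
  have expand : η * v 0 + ∑ j, (-(nv j : ℝ)) * (α j * v 0 - v j.succ)
      = (n0 : ℝ) * v 0 + ∑ j, (nv j : ℝ) * v j.succ := by
    rw [hη, hS, add_mul, Finset.sum_mul, add_assoc, ← Finset.sum_add_distrib]
    congr 1
    exact Finset.sum_congr rfl fun j _ => by ring
  have hrow0int : M.mulVec v 0 = ((n0 * x 0 + ∑ j, nv j * x j.succ : ℤ) : ℝ) := by
    rw [hrow0, expand]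
    push_cast
    rfl
  have hI0 : n0 * x 0 + ∑ j, nv j * x j.succ = 0 := by
    have h := hxb 0
    rw [hrow0int] at h
    simp only [hb, Fin.cons_zero] at h
    have h1 : |(n0 * x 0 + ∑ j, nv j * x j.succ : ℤ)| < 1 := by
      have : |((n0 * x 0 + ∑ j, nv j * x j.succ : ℤ) : ℝ)| < 1 := lt_of_le_of_lt h (by norm_num)
      rw [← Int.cast_abs] at this
      exact_mod_cast this
    exact Int.abs_lt_one_iff.mp h1
  have hbj : ∀ j : Fin d, |α j * v 0 - v j.succ| ≤ Y := by
    intro j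
    have h := hxb j.succ
    rw [hrowj j] at h
    simpa [hb, Fin.cons_succ] using h
  -- x 0 ≠ 0
  have hq0 : x 0 ≠ 0 := by
    intro h00
    apply hx0
    funext i
    rcases Fin.eq_zero_or_eq_succ i with rfl | ⟨j, rfl⟩
    · simpa using h00
    · have h := hbj j
      have hv0 : v 0 = 0 := by simp [hv, h00]
      rw [hv0, mul_zero, zero_sub, abs_neg] at h
      have h5 : |(x j.succ : ℝ)| < 1 := lt_of_le_of_lt h hY1
      rw [← Int.cast_abs] at h5
      have h6 : |x j.succ| < 1 := by exact_mod_cast h5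
      simpa using Int.abs_lt_one_iff.mp h6
  set qa : ℕ := (x 0).natAbs with hqa
  have hqapos : 0 < qa := Int.natAbs_pos.mpr hq0
  have hqaR : (0:ℝ) < (qa:ℝ) := by exact_mod_cast hqapos
  have habsx0 : |(x 0 : ℝ)| = (qa : ℝ) := by
    rw [hqa, Nat.cast_natAbs, Int.cast_abs]
  -- dist01 bounds
  have hdistj : ∀ j : Fin d, dist01 ((qa : ℝ) * α j) ≤ Y := by
    intro j
    have hbase : dist01 ((x 0 : ℝ) * α j) ≤ Y := by
      refine le_trans (dist01_le_int _ (x j.succ)) ?_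
      have : (x 0 : ℝ) * α j - (x j.succ : ℝ) = α j * v 0 - v j.succ := by
        simp [hv]; ring
      rw [this]
      exact hbj j
    rcases abs_cases ((x 0 : ℝ)) with ⟨h1, _⟩ | ⟨h1, _⟩
    · rw [← habsx0, h1]; exact hbase
    · rw [← habsx0, h1, neg_mul, dist01_neg]; exact hbase
  have hsim : simErr d α qa ≤ Y := ciSup_le hdistj
  have hcqY : c ≤ (qa : ℝ) ^ ((1:ℝ)/d) * Y := by
    refine le_trans (hbadc qa hqapos) ?_
    exact mul_le_mul_of_nonneg_left hsim (Real.rpow_nonneg (le_of_lt hqaR) _)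
  -- q bound
  have hIr : (n0 : ℝ) * v 0 + ∑ j, (nv j : ℝ) * v j.succ = 0 := by
    have := congrArg (Int.cast : ℤ → ℝ) hI0
    push_cast at this
    convert this using 2 <;> simp [hv]
  have hkey : v 0 * η = ∑ j, (nv j : ℝ) * (α j * v 0 - v j.succ) := by
    have h2 : ∑ j, (nv j : ℝ) * (α j * v 0 - v j.succ)
        = (∑ j, (nv j : ℝ) * α j) * v 0 - ∑ j, (nv j : ℝ) * v j.succ := by
      rw [Finset.sum_mul, ← Finset.sum_sub_distrib]
      exact Finset.sum_congr rfl fun j _ => by ring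
    rw [h2, hη, hS]
    have h3 : ∑ j, (nv j : ℝ) * v j.succ = -((n0 : ℝ) * v 0) := by linarith
    rw [h3]
    ring
  have hNj : ∀ j : Fin d, |(nv j : ℝ)| ≤ (N : ℝ) := by
    intro j
    have : (nv j).natAbs ≤ N := Finset.le_sup (f := fun j => (nv j).natAbs) (Finset.mem_univ j)
    rw [← Int.cast_abs, Int.abs_eq_natAbs]
    exact_mod_cast this
  have hqδ : (qa : ℝ) * δ ≤ (d : ℝ) * N * Y := by
    have h1 : |v 0 * η| = (qa : ℝ) * δ := by
      rw [abs_mul, hηδ, show |v 0| = (qa:ℝ) from by simpa [hv] using habsx0]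
    have h2 : |∑ j, (nv j : ℝ) * (α j * v 0 - v j.succ)| ≤ (d : ℝ) * N * Y := by
      refine le_trans (Finset.abs_sum_le_sum_abs _ _) ?_
      have hterm : ∀ j : Fin d, |(nv j : ℝ) * (α j * v 0 - v j.succ)| ≤ (N : ℝ) * Y := by
        intro j
        rw [abs_mul]
        exact mul_le_mul (hNj j) (hbj j) (abs_nonneg _) (by exact_mod_cast Nat.zero_le N)
      refine le_trans (Finset.sum_le_sum fun j _ => hterm j) ?_
      rw [Finset.sum_const, Finset.card_univ, Fintype.card_fin, nsmul_eq_mul]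
      rw [mul_assoc]
    rw [← h1, hkey]
    exact h2
  -- final computation
  have hpowq : ((qa : ℝ) ^ ((1:ℝ)/d)) ^ d = (qa : ℝ) := by
    rw [← Real.rpow_natCast ((qa:ℝ) ^ ((1:ℝ)/d)) d, ← Real.rpow_mul (le_of_lt hqaR),
      one_div, inv_mul_cancel₀ (by exact_mod_cast (ne_of_gt hd) : (d:ℝ) ≠ 0), Real.rpow_one]
  have hcd : c ^ d ≤ (qa : ℝ) * (2 * δ) := by
    have h := pow_le_pow_left₀ (le_of_lt hc) hcqY d
    rw [mul_pow, hpowq, hYd] at h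
    exact h
  have hdN0 : (0:ℝ) < 2 * d * N := by
    have : (0:ℝ) < (d:ℝ) := by exact_mod_cast hd
    have : (0:ℝ) < (N:ℝ) := by exact_mod_cast hN1
    positivity
  have hcd2 : c ^ d ≤ 2 * d * N * Y := by
    calc c ^ d ≤ (qa : ℝ) * (2 * δ) := hcd
    _ = 2 * ((qa : ℝ) * δ) := by ring
    _ ≤ 2 * ((d : ℝ) * N * Y) := by linarith
    _ = 2 * d * N * Y := by ring
  have hYlb : c ^ d / (2 * d * N) ≤ Y := by
    rw [div_le_iff₀ hdN0]
    linarith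
  have hfin : (c ^ d / (2 * d * N)) ^ d ≤ 2 * δ := by
    rw [← hYd]
    exact pow_le_pow_left₀ (by positivity) hYlb d
  have hsplit : (c ^ d / (2 * (d:ℝ) * N)) ^ d = (c ^ d / (2 * d)) ^ d / (N : ℝ) ^ d := by
    rw [← div_pow]
    congr 1
    field_simp
  rw [hsplit] at hfin
  have hNd0 : (0:ℝ) < (N:ℝ) ^ d := by positivity
  rw [div_le_iff₀ hNd0] at hfin
  rw [div_le_iff₀ hNd0]
  have hm : c' ≤ (c ^ d / (2 * (d:ℝ))) ^ d / 2 := min_le_right _ _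
  linarith

theorem badly_approx_sup_ratio_heights_finite
    (d : ℕ) (α : Fin d → ℝ)
    (hli : LinearIndependent ℚ (Fin.cons 1 α : Fin (d + 1) → ℝ))
    (hbad : IsBadlyApprox d α)
    (m : ℕ → Fin (d + 1) → ℤ) (hm : IsLinFormBestApprox d α m) :
    ∃ C : ℝ, ∀ ν : ℕ, (lfHeight d (m (ν + 1)) : ℝ) / (lfHeight d (m ν) : ℝ) ≤ C := by
  classical
  obtain ⟨c, hc, hbadc⟩ := hbad
  rcases Nat.eq_zero_or_pos d with rfl | hd
  · exfalso
    have h1 := hbadc 1 one_pos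
    rw [show simErr 0 α 1 = 0 from Real.iSup_of_isEmpty _] at h1
    rw [mul_zero] at h1
    linarith
  have hdR : (0:ℝ) < (d:ℝ) := by exact_mod_cast hd
  set c' : ℝ := min (1/2) ((c ^ d / (2 * d)) ^ d / 2) with hc'
  have hc'0 : 0 < c' := lt_min (by norm_num) (by positivity)
  set K : ℝ := (3 / (2 * c')) ^ ((1:ℝ)/d) with hK
  have hK0 : 0 ≤ K := Real.rpow_nonneg (by positivity) _
  refine ⟨K + 2, ?_⟩
  intro ν
  rcases Nat.eq_zero_or_pos (lfHeight d (m ν)) with h0 | hMν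
  · rw [h0]
    simp only [Nat.cast_zero, div_zero]
    linarith
  have hMνR : (1:ℝ) ≤ (lfHeight d (m ν) : ℝ) := by exact_mod_cast hMν
  have hMν0R : (0:ℝ) < (lfHeight d (m ν) : ℝ) := by linarith
  rcases le_or_gt (lfHeight d (m (ν + 1))) 2 with hle2 | hgt2
  · rw [div_le_iff₀ hMν0R]
    have h2 : (lfHeight d (m (ν+1)) : ℝ) ≤ 2 := by exact_mod_cast hle2
    nlinarith
  · set Q : ℕ := lfHeight d (m (ν + 1)) - 1 with hQ
    have hQ2 : 2 ≤ Q := by omega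
    have hQsucc : Q + 1 = lfHeight d (m (ν + 1)) := by omega
    obtain ⟨nvec, htail, hht, hval⟩ := dirichlet_lf d hd α Q hQ2
    obtain ⟨μ, hμh, hμv⟩ := hm.2.2.2 nvec htail
    have hμlt : μ < ν + 1 := by
      by_contra hge
      push_neg at hge
      have h1 : lfHeight d (m (ν+1)) ≤ lfHeight d (m μ) := hm.1.monotone hge
      omega
    have hμν : μ ≤ ν := by omega
    have hLν : lfValue d α (m ν) ≤ (3/2)/(Q:ℝ)^d :=
      le_trans (hm.2.1.antitone hμν) (le_trans hμv hval)
    have htailν : (fun j : Fin d => m ν j.succ) ≠ 0 := by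
      intro h
      have hz : lfHeight d (m ν) = 0 := by
        refine Nat.le_zero.mp (Finset.sup_le fun j _ => ?_)
        rw [show m ν j.succ = 0 from congrFun h j]
        simp
      omega
    have hpos := dist01_pos_of_li d α hli _ htailν
    have hlow := transfer_lf d hd α c hc hbadc _ htailν hpos
    rw [← hc'] at hlow
    have hlowv : c' / (lfHeight d (m ν) : ℝ)^d ≤ lfValue d α (m ν) := by
      refine le_trans hlow ?_
      refine le_trans (dist01_le_int _ (-(m ν 0))) ?_
      rw [Int.cast_neg, sub_neg_eq_add, add_comm]
      exact le_refl _
    have hQ0R : (0:ℝ) < (Q:ℝ) := by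
      have : 0 < Q := by omega
      exact_mod_cast this
    have hQd0 : (0:ℝ) < (Q:ℝ)^d := by positivity
    have hMd0 : (0:ℝ) < (lfHeight d (m ν) : ℝ)^d := by positivity
    have hchain : c' / (lfHeight d (m ν) : ℝ)^d ≤ (3/2)/(Q:ℝ)^d := le_trans hlowv hLν
    have hcross : (Q:ℝ)^d ≤ 3/(2*c') * (lfHeight d (m ν) : ℝ)^d := by
      rw [div_le_div_iff₀ hMd0 hQd0] at hchain
      rw [div_mul_eq_mul_div, le_div_iff₀ (by positivity : (0:ℝ) < 2*c')]
      nlinarith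
    have hQle : (Q:ℝ) ≤ K * (lfHeight d (m ν) : ℝ) := by
      have hr := Real.rpow_le_rpow (le_of_lt hQd0) hcross (by positivity : (0:ℝ) ≤ (1:ℝ)/d)
      rw [← Real.rpow_natCast (Q:ℝ) d, ← Real.rpow_mul (le_of_lt hQ0R),
        mul_one_div_cancel (ne_of_gt hdR), Real.rpow_one] at hr
      rw [Real.mul_rpow (by positivity) (by positivity)] at hr
      rw [← Real.rpow_natCast (lfHeight d (m ν) : ℝ) d, ← Real.rpow_mul (by positivity),
        mul_one_div_cancel (ne_of_gt hdR), Real.rpow_one] at hr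
      exact hr
    rw [div_le_iff₀ hMν0R]
    have hM1cast : (lfHeight d (m (ν+1)) : ℝ) = (Q:ℝ) + 1 := by
      rw [← hQsucc]
      push_cast
      ring
    rw [hM1cast]
    nlinarith
end

section
/- Let z = (z₀,z₁,…,z_d) and z′ = (z₀′,z₁′,…,z_d′) be two vectors in ℝ^{d+1} with 0 < z₀ < z₀′ and max_{1≤j≤d}|z_j| > max_{1≤j≤d}|z_j′|. Let Δ₂ be the square root of the sum of the squares of all 2×2 minors of the 2×(d+1) matrix with rows z and z′. If max_{1≤j≤d}|z_j| · z₀′ ≥ 1 and max_{1≤j≤d}|z_j| ≤ 1, then max_{1≤j≤d}|z_j| · z₀′ ≥ Δ₂/(2√2·d). -/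
theorem tail_norm_times_height_ge_gram
    (d : ℕ) (z z' : Fin (d + 1) → ℝ)
    (h0 : 0 < z 0) (h01 : z 0 < z' 0)
    (htail : (⨆ j : Fin d, |z' j.succ|) < ⨆ j : Fin d, |z j.succ|)
    (Δ₂ : ℝ)
    (hΔ : Δ₂ = Real.sqrt (∑ p ∈ Finset.univ.filter
        (fun p : Fin (d + 1) × Fin (d + 1) => p.1 < p.2),
        (z p.1 * z' p.2 - z p.2 * z' p.1) ^ 2))
    (hge1 : 1 ≤ (⨆ j : Fin d, |z j.succ|) * z' 0)
    (hle1 : (⨆ j : Fin d, |z j.succ|) ≤ 1) :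
    Δ₂ / (2 * Real.sqrt 2 * d) ≤ (⨆ j : Fin d, |z j.succ|) * z' 0 := by
  rcases Nat.eq_zero_or_pos d with hd | hd
  · subst hd
    rw [iSup_of_empty', iSup_of_empty'] at htail
    exact absurd htail (lt_irrefl _)
  set M := ⨆ j : Fin d, |z j.succ| with hMdef
  set M' := ⨆ j : Fin d, |z' j.succ| with hM'def
  haveI : Nonempty (Fin d) := Fin.pos_iff_nonempty.mp hd
  have hM : ∀ j : Fin d, |z j.succ| ≤ M := fun j =>
    le_ciSup (f := fun j : Fin d => |z j.succ|) (Set.Finite.bddAbove (Set.finite_range _)) j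
  have hM' : ∀ j : Fin d, |z' j.succ| ≤ M' := fun j =>
    le_ciSup (f := fun j : Fin d => |z' j.succ|) (Set.Finite.bddAbove (Set.finite_range _)) j
  have hM0 : 0 ≤ M := le_trans (abs_nonneg _) (hM (Classical.arbitrary _))
  have hz0' : (1:ℝ) ≤ z' 0 := by nlinarith [hge1, hle1, h0, h01]
  have hzk : ∀ k : Fin (d+1), k ≠ 0 → |z k| ≤ M := by
    intro k hk
    have := hM (k.pred hk)
    rwa [Fin.succ_pred] at this
  have hz'k : ∀ k : Fin (d+1), k ≠ 0 → |z' k| ≤ M := by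
    intro k hk
    have := hM' (k.pred hk)
    rw [Fin.succ_pred] at this
    exact this.trans htail.le
  have hza : ∀ i : Fin (d+1), |z i| ≤ z' 0 := by
    intro i
    by_cases hi : i = 0
    · subst hi; rw [abs_of_pos h0]; linarith
    · exact (hzk i hi).trans (hle1.trans hz0')
  have hz'a : ∀ i : Fin (d+1), |z' i| ≤ z' 0 := by
    intro i
    by_cases hi : i = 0
    · subst hi; rw [abs_of_pos (by linarith)]
    · exact (hz'k i hi).trans (hle1.trans hz0')
  set A := M * z' 0 with hAdef
  have hA1 : (1:ℝ) ≤ A := hge1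
  -- per-term bound
  set S := Finset.univ.filter
      (fun p : Fin (d + 1) × Fin (d + 1) => p.1 < p.2) with hSdef
  have hterm : ∀ p ∈ S, (z p.1 * z' p.2 - z p.2 * z' p.1) ^ 2 ≤ (2*A)^2 := by
    intro p hp
    have hlt : p.1 < p.2 := (Finset.mem_filter.mp hp).2
    have hne : p.2 ≠ 0 := by
      intro h; rw [h] at hlt; exact absurd hlt (by simp [Fin.le_zero_iff])
    have h1 : |z p.1 * z' p.2 - z p.2 * z' p.1| ≤ 2 * A := by
      calc |z p.1 * z' p.2 - z p.2 * z' p.1|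
          ≤ |z p.1 * z' p.2| + |z p.2 * z' p.1| := abs_sub _ _
        _ = |z p.1| * |z' p.2| + |z p.2| * |z' p.1| := by rw [abs_mul, abs_mul]
        _ ≤ z' 0 * M + M * z' 0 := by
            have := hza p.1; have := hz'a p.1
            have := hzk p.2 hne; have := hz'k p.2 hne
            have h1 := abs_nonneg (z p.1); have h2 := abs_nonneg (z' p.2)
            have h3 := abs_nonneg (z p.2); have h4 := abs_nonneg (z' p.1)
            nlinarith
        _ = 2 * A := by ring
    calc (z p.1 * z' p.2 - z p.2 * z' p.1) ^ 2
        = |z p.1 * z' p.2 - z p.2 * z' p.1| ^ 2 := (sq_abs _).symm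
      _ ≤ (2*A)^2 := by nlinarith [abs_nonneg (z p.1 * z' p.2 - z p.2 * z' p.1)]
  -- cardinality bound
  have hcard : S.card ≤ (d+1) * d := by
    have := Finset.card_le_card_of_injOn
      (f := fun p : Fin (d+1) × Fin (d+1) => (p.1, (⟨p.2.val - 1, by omega⟩ : Fin d)))
      (s := S) (t := Finset.univ)
      (fun a _ => Finset.mem_univ _)
      (by
        intro p hp q hq hfq
        have hp2 : (0:Fin (d+1)) < p.2 := lt_of_le_of_lt (Fin.zero_le _) (Finset.mem_filter.mp hp).2
        have hq2 : (0:Fin (d+1)) < q.2 := lt_of_le_of_lt (Fin.zero_le _) (Finset.mem_filter.mp hq).2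
        simp only [Prod.mk.injEq, Fin.mk.injEq] at hfq
        obtain ⟨h1, h2⟩ := hfq
        have hp2' : 0 < p.2.val := hp2
        have hq2' : 0 < q.2.val := hq2
        have : p.2 = q.2 := Fin.ext (by omega)
        exact Prod.ext h1 this)
    simpa [Fintype.card_fin] using this
  -- sum bound
  have hsum : (∑ p ∈ S, (z p.1 * z' p.2 - z p.2 * z' p.1) ^ 2)
      ≤ ((d+1) * d : ℕ) * (2*A)^2 := by
    calc (∑ p ∈ S, (z p.1 * z' p.2 - z p.2 * z' p.1) ^ 2)
        ≤ S.card • (2*A)^2 := Finset.sum_le_card_nsmul _ _ _ hterm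
      _ = (S.card : ℝ) * (2*A)^2 := by rw [nsmul_eq_mul]
      _ ≤ ((d+1) * d : ℕ) * (2*A)^2 := by
          apply mul_le_mul_of_nonneg_right _ (by positivity)
          exact_mod_cast hcard
  have hsum' : (∑ p ∈ S, (z p.1 * z' p.2 - z p.2 * z' p.1) ^ 2)
      ≤ (2 * Real.sqrt 2 * d * A)^2 := by
    have hsq2 : Real.sqrt 2 ^ 2 = 2 := Real.sq_sqrt (by norm_num)
    have hd1 : (1:ℝ) ≤ d := by exact_mod_cast hd
    have hA0 : (0:ℝ) ≤ A := by linarith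
    have hcast : (((d+1) * d : ℕ) : ℝ) = ((d:ℝ)+1) * d := by push_cast; ring
    rw [hcast] at hsum
    have : ((d:ℝ)+1) * d * (2*A)^2 ≤ (2 * Real.sqrt 2 * d * A)^2 := by
      have : (2 * Real.sqrt 2 * d * A)^2 = 8 * d^2 * A^2 := by
        rw [mul_pow, mul_pow, mul_pow, hsq2]; ring
      rw [this]
      nlinarith [sq_nonneg A]
    linarith
  have hΔle : Δ₂ ≤ 2 * Real.sqrt 2 * d * A := by
    rw [hΔ]
    have hpos : 0 ≤ 2 * Real.sqrt 2 * d * A := by positivity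
    calc Real.sqrt (∑ p ∈ S, (z p.1 * z' p.2 - z p.2 * z' p.1) ^ 2)
        ≤ Real.sqrt ((2 * Real.sqrt 2 * d * A)^2) := Real.sqrt_le_sqrt hsum'
      _ = 2 * Real.sqrt 2 * d * A := Real.sqrt_sq hpos
  have hdpos : (0:ℝ) < 2 * Real.sqrt 2 * d := by
    have : (0:ℝ) < d := by exact_mod_cast hd
    positivity
  rw [div_le_iff₀ hdpos]
  linarith [hΔle]
end

section
/- Let Λ be a full-rank lattice in ℝ^{d+1} (coordinates (x₀,…,x_d)) such that Λ ∩ {x : x₀ = 0} = {0}, and let z_ν ∈ Λ, ν ≥ 1, be its sequence of best approximation points to the x₀-axis, with z_{0,ν} strictly increasing positive and |z̲_ν|_∞ strictly decreasing; assume the points z_ν do not lie in a proper linear subspace of ℝ^{d+1}. Define indices ν₁=1, ν₂=2, and inductively ν_j as the smallest μ ≥ ν_{j−1}+1 such that z_{ν₁},…,z_{ν_{j−1}},z_μ are linearly independent; let π_j be the real span of z_{ν₁},…,z_{ν_j}, Γ_j = π_j ∩ Λ, and Δ_j the j-dimensional fundamental volume of Γ_j. Then for every j one has Δ_{j+1}/Δ_j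 ≤ 2√d · (z_{0,ν_{j+1}}/z_{0,ν_{j+1}−1}) · |z̲_{ν_{j+1}−1}|_∞. -/
/-- The `k`-dimensional volume of the parallelepiped spanned by `B`, i.e. the square root of
the Gram determinant; for a ℤ-basis of a rank-`k` lattice this is its fundamental volume. -/
noncomputable def gramVol {n k : ℕ} (B : Fin k → Fin n → ℝ) : ℝ :=
  Real.sqrt (Matrix.det (Matrix.of fun i i' : Fin k => ∑ l, B i l * B i' l))

/-!
Write `ν = ν_{j+1}`, `μ = ν - 1` and `π_j` for the span of `z_{ν_1}, …, z_{ν_j}`. The minimality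
in the choice of `ν_{j+1}` gives `z_μ ∈ π_j` and `z_ν ∉ π_j`. A ℤ-basis of `Γ_j` together with
`z_ν` spans a full-rank sublattice of `Γ_{j+1}`, so its Gram determinant is a nonzero square
integer times `Δ_{j+1}^2`; on the other hand it equals `Δ_j^2 · dist(z_ν, π_j)^2`. Hence
`Δ_{j+1} / Δ_j ≤ dist(z_ν, π_j) ≤ |z_ν - t z_μ|` with `t = z_{0,ν} / z_{0,μ} ≥ 1`. That vector has
vanishing `x₀`-coordinate and `|·|_∞`-norm at most `|z̲_ν|_∞ + t |z̲_μ|_∞ ≤ 2 t |z̲_μ|_∞`, so its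
Euclidean length is at most `2 √d t |z̲_μ|_∞`.
-/

open Matrix Submodule Set

section Gram

variable {ι : Type*} {k : ℕ}

lemma exists_intMatrix_of_mem_span_int {m : ℕ} {A : Fin k → ι → ℝ} {B : Fin m → ι → ℝ}
    (hA : ∀ i, A i ∈ span ℤ (range B)) :
    ∃ M : Matrix (Fin k) (Fin m) ℤ, of A = M.map (Int.cast : ℤ → ℝ) * of B := by
  choose c hc using fun i => (mem_span_range_iff_exists_fun ℤ).1 (hA i)
  refine ⟨of c, ?_⟩
  ext i l
  simp [mul_apply, ← hc i, Finset.sum_apply]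

variable [Fintype ι]

lemma dotProduct_self_nonneg (v : ι → ℝ) : 0 ≤ v ⬝ᵥ v := by
  simpa using dotProduct_self_star_nonneg v

lemma exists_mem_forall_dotProduct_sub_eq_zero (S : Submodule ℝ (ι → ℝ)) (z : ι → ℝ) :
    ∃ u ∈ S, ∀ v ∈ S, v ⬝ᵥ (z - u) = 0 := by
  let K := S.comap (WithLp.linearEquiv 2 ℝ (ι → ℝ)).toLinearMap
  obtain ⟨y, hy, w, hw, hzyw⟩ := K.exists_add_mem_mem_orthogonal (WithLp.toLp 2 z)
  refine ⟨y.ofLp, hy, fun v hv => ?_⟩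
  have hzy : z - y.ofLp = w.ofLp := by
    rw [sub_eq_iff_eq_add', ← WithLp.ofLp_add, ← hzyw]
  have hinner := (K.mem_orthogonal w).1 hw (WithLp.toLp 2 v) hv
  rw [EuclideanSpace.inner_eq_star_dotProduct] at hinner
  simpa [hzy, dotProduct_comm] using hinner

noncomputable def gramDet (B : Fin k → ι → ℝ) : ℝ :=
  (of fun i i' => B i ⬝ᵥ B i').det

lemma gramVol_eq_sqrt_gramDet {n : ℕ} (B : Fin k → Fin n → ℝ) : gramVol B = √(gramDet B) := rfl

lemma gramDet_eq_det_mul_transpose (B : Fin k → ι → ℝ) :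
    gramDet B = (of B * (of B)ᵀ).det := rfl

lemma gramDet_nonneg (B : Fin k → ι → ℝ) : 0 ≤ gramDet B := by
  rw [gramDet_eq_det_mul_transpose, ← conjTranspose_eq_transpose_of_trivial]
  exact (posSemidef_self_mul_conjTranspose _).det_nonneg

lemma gramDet_eq_det_sq_mul {A B : Fin k → ι → ℝ} {M : Matrix (Fin k) (Fin k) ℝ}
    (h : of A = M * of B) : gramDet A = M.det ^ 2 * gramDet B := by
  rw [gramDet_eq_det_mul_transpose, gramDet_eq_det_mul_transpose, h, transpose_mul,
    Matrix.mul_assoc, ← Matrix.mul_assoc (of B), det_mul, det_mul, det_transpose]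
  ring

lemma gramDet_snoc_sub_smul (B : Fin k → ι → ℝ) (z : ι → ℝ) (i : Fin k) (c : ℝ) :
    gramDet (Fin.snoc B (z - c • B i)) = gramDet (Fin.snoc B z) := by
  have hrow : of (Fin.snoc B (z - c • B i)) =
      transvection (Fin.last k) i.castSucc (-c) * of (Fin.snoc B z) := by
    ext a l
    induction a using Fin.lastCases with
    | last => simp [sub_eq_add_neg]
    | cast a => simp [transvection_mul_apply_of_ne, Fin.castSucc_ne_last]
  rw [gramDet_eq_det_sq_mul hrow, det_transvection_of_ne, one_pow, one_mul]
  exact (Fin.castSucc_ne_last i).symm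

lemma gramDet_snoc_sub_of_mem_span (B : Fin k → ι → ℝ) (z : ι → ℝ) {u : ι → ℝ}
    (hu : u ∈ span ℝ (range B)) :
    gramDet (Fin.snoc B (z - u)) = gramDet (Fin.snoc B z) := by
  obtain ⟨c, rfl⟩ := (mem_span_range_iff_exists_fun ℝ).1 hu
  induction (Finset.univ : Finset (Fin k)) using Finset.induction_on with
  | empty => simp
  | insert a s ha ih =>
    rw [Finset.sum_insert ha, add_comm (c a • B a), ← sub_sub, gramDet_snoc_sub_smul, ih]

lemma gramDet_snoc_of_orthogonal (B : Fin k → ι → ℝ) {h : ι → ℝ} (horth : ∀ i, B i ⬝ᵥ h = 0) :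
    gramDet (Fin.snoc B h) = (h ⬝ᵥ h) * gramDet B := by
  set C : Fin (k + 1) → ι → ℝ := Fin.snoc B h
  have hminor : (of fun i i' => C i ⬝ᵥ C i').submatrix
      (Fin.last k).succAbove (Fin.last k).succAbove = of fun i i' => B i ⬝ᵥ B i' := by
    ext; simp [C, Fin.succAbove_last]
  -- Laplace expansion along the last row, whose only nonzero entry is `h ⬝ᵥ h`.
  rw [gramDet, det_succ_row _ (Fin.last k), Fin.sum_univ_castSucc, hminor]
  simp [C, horth, dotProduct_comm h, gramDet]

lemma exists_gramDet_snoc_eq (B : Fin k → ι → ℝ) (z : ι → ℝ) :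
    ∃ u ∈ span ℝ (range B), (∀ w ∈ span ℝ (range B), (z - u) ⬝ᵥ (z - u) ≤ (z - w) ⬝ᵥ (z - w)) ∧
      gramDet (Fin.snoc B z) = (z - u) ⬝ᵥ (z - u) * gramDet B := by
  obtain ⟨u, hu, horth⟩ := exists_mem_forall_dotProduct_sub_eq_zero (span ℝ (range B)) z
  refine ⟨u, hu, fun w hw => ?_, ?_⟩
  · have hcross := horth (u - w) (sub_mem hu hw)
    have hsplit : z - w = (z - u) + (u - w) := by abel
    rw [hsplit, add_dotProduct, dotProduct_add, dotProduct_add, dotProduct_comm (z - u) (u - w),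
      hcross]
    linarith [dotProduct_self_nonneg (u - w)]
  · rw [← gramDet_snoc_sub_of_mem_span B z hu,
      gramDet_snoc_of_orthogonal B fun i => horth _ (subset_span (mem_range_self i))]

lemma gramDet_snoc_le (B : Fin k → ι → ℝ) (z : ι → ℝ) {w : ι → ℝ}
    (hw : w ∈ span ℝ (range B)) :
    gramDet (Fin.snoc B z) ≤ (z - w) ⬝ᵥ (z - w) * gramDet B := by
  obtain ⟨u, -, hmin, hdet⟩ := exists_gramDet_snoc_eq B z
  rw [hdet]
  exact mul_le_mul_of_nonneg_right (hmin w hw) (gramDet_nonneg B)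

lemma gramDet_snoc_pos {B : Fin k → ι → ℝ} {z : ι → ℝ} (hB : 0 < gramDet B)
    (hz : z ∉ span ℝ (range B)) : 0 < gramDet (Fin.snoc B z) := by
  obtain ⟨u, hu, -, hdet⟩ := exists_gramDet_snoc_eq B z
  have hzu : z - u ≠ 0 := fun h => hz (sub_eq_zero.1 h ▸ hu)
  rw [hdet]
  exact mul_pos ((dotProduct_self_nonneg _).lt_of_ne' (dotProduct_self_eq_zero.not.2 hzu)) hB

lemma gramDet_le_of_mem_span_int {A B : Fin k → ι → ℝ} (hA : ∀ i, A i ∈ span ℤ (range B))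
    (hA0 : 0 < gramDet A) : gramDet B ≤ gramDet A := by
  obtain ⟨M, hM⟩ := exists_intMatrix_of_mem_span_int hA
  have hdet : gramDet A = (M.det : ℝ) ^ 2 * gramDet B := by
    rw [gramDet_eq_det_sq_mul hM, ← Int.cast_det]
  have hM0 : M.det ≠ 0 := by
    rintro h
    simp [hdet, h] at hA0
  have hM1 : (1 : ℝ) ≤ (M.det : ℝ) ^ 2 := by
    exact_mod_cast (one_le_sq_iff_one_le_abs _).2 (Int.one_le_abs hM0)
  rw [hdet]
  exact le_mul_of_one_le_left (gramDet_nonneg B) hM1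

lemma gramVol_le_of_mem_span_int {n : ℕ} {B₁ : Fin k → Fin n → ℝ} {B₂ : Fin (k + 1) → Fin n → ℝ}
    {z w : Fin n → ℝ} (hB₁ : ∀ i, B₁ i ∈ span ℤ (range B₂)) (hz : z ∈ span ℤ (range B₂))
    (hzB₁ : z ∉ span ℝ (range B₁)) (hw : w ∈ span ℝ (range B₁)) (hvol : gramVol B₁ ≠ 0) :
    gramVol B₂ ≤ √((z - w) ⬝ᵥ (z - w)) * gramVol B₁ := by
  rw [gramVol_eq_sqrt_gramDet, Real.sqrt_ne_zero (gramDet_nonneg B₁)] at hvol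
  have hsnoc : ∀ i, (Fin.snoc B₁ z : Fin (k + 1) → Fin n → ℝ) i ∈ span ℤ (range B₂) :=
    Fin.lastCases (by simpa using hz) fun i => by simpa using hB₁ i
  have hle := (gramDet_le_of_mem_span_int hsnoc
    (gramDet_snoc_pos ((gramDet_nonneg B₁).lt_of_ne' hvol) hzB₁)).trans (gramDet_snoc_le B₁ z hw)
  rw [gramVol_eq_sqrt_gramDet, gramVol_eq_sqrt_gramDet, ← Real.sqrt_mul (dotProduct_self_nonneg _)]
  exact Real.sqrt_le_sqrt hle

end Gram

lemma span_real_eq_of_span_int_eq {ι ι' V : Type*} [AddCommGroup V] [Module ℝ V] {B : ι → V}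
    {v : ι' → V} {L : Set V} (hv : ∀ i, v i ∈ L)
    (h : (span ℤ (range B) : Set V) = {x | x ∈ L ∧ x ∈ span ℝ (range v)}) :
    span ℝ (range B) = span ℝ (range v) := by
  refine le_antisymm (span_le.2 (range_subset_iff.2 fun i => ?_))
    (span_le.2 (range_subset_iff.2 fun i => ?_))
  · exact (h.subset (subset_span (mem_range_self i))).2
  · exact span_subset_span ℤ ℝ _ (h.symm.subset ⟨hv i, subset_span (mem_range_self i)⟩)

lemma iSup_abs_succ_eq_norm_tail {d : ℕ} (x : Fin (d + 1) → ℝ) :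
    (⨆ j : Fin d, |x j.succ|) = ‖Fin.tail x‖ := by
  refine le_antisymm ?_ ((pi_norm_le_iff_of_nonneg (Real.iSup_nonneg fun j => abs_nonneg _)).2
    fun j => le_ciSup (f := fun j : Fin d => |x j.succ|) (finite_range _).bddAbove j)
  rcases isEmpty_or_nonempty (Fin d) with h | h
  · simp [Real.iSup_of_isEmpty]
  · exact ciSup_le fun j => norm_le_pi_norm (Fin.tail x) j

lemma sqrt_dotProduct_self_le {d : ℕ} (x : Fin d → ℝ) : √(x ⬝ᵥ x) ≤ √d * ‖x‖ := by
  rw [← Real.sqrt_sq (norm_nonneg x), ← Real.sqrt_mul (Nat.cast_nonneg _)]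
  refine Real.sqrt_le_sqrt ?_
  calc x ⬝ᵥ x = ∑ j, |x j| ^ 2 := by simp [dotProduct, sq]
    _ ≤ ∑ _j : Fin d, ‖x‖ ^ 2 := Finset.sum_le_sum fun j _ => by
        gcongr; exact norm_le_pi_norm x j
    _ = d * ‖x‖ ^ 2 := by simp

lemma dotProduct_self_eq_tail {d : ℕ} {y : Fin (d + 1) → ℝ} (h0 : y 0 = 0) :
    y ⬝ᵥ y = Fin.tail y ⬝ᵥ Fin.tail y := by
  simp [dotProduct, Fin.sum_univ_succ, h0, Fin.tail]

lemma sqrt_dotProduct_sub_smul_le {d : ℕ} {x y : Fin (d + 1) → ℝ} (hy : 0 < y 0) (hyx : y 0 ≤ x 0)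
    (hxy : ‖Fin.tail x‖ ≤ ‖Fin.tail y‖) :
    √((x - (x 0 / y 0) • y) ⬝ᵥ (x - (x 0 / y 0) • y)) ≤ 2 * √d * (x 0 / y 0) * ‖Fin.tail y‖ := by
  set t := x 0 / y 0
  have ht : 1 ≤ t := (one_le_div hy).2 hyx
  have h0 : (x - t • y) 0 = 0 := by simp [t, div_mul_cancel₀ _ hy.ne']
  have htail : ‖Fin.tail (x - t • y)‖ ≤ 2 * t * ‖Fin.tail y‖ :=
    calc ‖Fin.tail x - t • Fin.tail y‖ ≤ ‖Fin.tail x‖ + t * ‖Fin.tail y‖ := by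
          simpa [norm_smul, abs_of_pos (zero_lt_one.trans_le ht)] using
            norm_sub_le (Fin.tail x) (t • Fin.tail y)
      _ ≤ 2 * t * ‖Fin.tail y‖ := by nlinarith [norm_nonneg (Fin.tail y)]
  rw [dotProduct_self_eq_tail h0]
  calc _ ≤ √d * ‖Fin.tail (x - t • y)‖ := sqrt_dotProduct_self_le _
    _ ≤ √d * (2 * t * ‖Fin.tail y‖) := by gcongr
    _ = 2 * √d * t * ‖Fin.tail y‖ := by ring

lemma ite_le_eq_snoc {V : Type*} (zs : ℕ → V) (n : ℕ → ℕ) (j : ℕ) (x : V) :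
    (fun i : Fin (j + 2) => if (i : ℕ) ≤ j then zs (n i) else x) =
      Fin.snoc (fun i : Fin (j + 1) => zs (n i)) x := by
  funext i
  induction i using Fin.lastCases with
  | last => simp
  | cast i => simp [Nat.le_of_lt_succ i.isLt]

lemma notMem_span_and_pred_mem_span_of_isLeast {K V : Type*} [DivisionRing K] [AddCommGroup V]
    [Module K V] {zs : ℕ → V} {n : ℕ → ℕ} {j : ℕ}
    (h : IsLeast {μ | n j < μ ∧ LinearIndependent K
      (Fin.snoc (fun i : Fin (j + 1) => zs (n i)) (zs μ) : Fin (j + 2) → V)} (n (j + 1))) :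
    zs (n (j + 1)) ∉ span K (range fun i : Fin (j + 1) => zs (n i)) ∧
      zs (n (j + 1) - 1) ∈ span K (range fun i : Fin (j + 1) => zs (n i)) := by
  obtain ⟨⟨hlt, hli⟩, hleast⟩ := h
  rw [linearIndependent_finSnoc] at hli
  refine ⟨hli.2, ?_⟩
  rcases (Nat.le_sub_one_of_lt hlt).eq_or_lt with heq | hgt
  · rw [← heq]
    exact subset_span ⟨Fin.last j, rfl⟩
  · by_contra hnot
    have := hleast ⟨hgt, linearIndependent_finSnoc.2 ⟨hli.1, hnot⟩⟩
    omega

lemma notMem_span_singleton_of_norm_tail_lt {d : ℕ} {x y : Fin (d + 1) → ℝ} (hx : 0 < x 0)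
    (hxy : x 0 ≤ y 0) (hyx : ‖Fin.tail y‖ < ‖Fin.tail x‖) : y ∉ ℝ ∙ x := by
  rintro h
  obtain ⟨a, rfl⟩ := mem_span_singleton.1 h
  have ha : 1 ≤ a := by
    simp only [Pi.smul_apply, smul_eq_mul] at hxy
    exact (le_mul_iff_one_le_left hx).1 hxy
  have htail : ‖Fin.tail (a • x)‖ = a * ‖Fin.tail x‖ := by
    rw [show Fin.tail (a • x) = a • Fin.tail x from rfl, norm_smul,
      Real.norm_of_nonneg (by linarith)]
  nlinarith [norm_nonneg (Fin.tail x)]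

lemma selected_notMem_span_and_pred_mem_span {d : ℕ} {zs : ℕ → Fin (d + 1) → ℝ}
    (hpos : ∀ ν, 0 < zs ν 0) (hinc : StrictMono fun ν => zs ν 0)
    (hdec : StrictAnti fun ν => ‖Fin.tail (zs ν)‖) {n : ℕ → ℕ} (hn0 : n 0 = 0) (hn1 : n 1 = 1)
    (hsel : ∀ j : ℕ, 1 ≤ j → j < d →
      IsLeast {μ : ℕ | n j < μ ∧
          LinearIndependent ℝ (fun i : Fin (j + 2) =>
            if (i : ℕ) ≤ j then zs (n i) else zs μ)}
        (n (j + 1)))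
    {j : ℕ} (hj : j < d) :
    zs (n (j + 1)) ∉ span ℝ (range fun i : Fin (j + 1) => zs (n i)) ∧
      zs (n (j + 1) - 1) ∈ span ℝ (range fun i : Fin (j + 1) => zs (n i)) := by
  rcases Nat.eq_zero_or_pos j with rfl | hj1
  · have hπ : (range fun i : Fin 1 => zs (n i)) = {zs 0} := by simp [range_unique, hn0]
    rw [hπ, hn1]
    exact ⟨notMem_span_singleton_of_norm_tail_lt (hpos 0) (hinc zero_lt_one).le
      (hdec zero_lt_one), mem_span_singleton_self _⟩
  · have hleast := hsel j hj1 hj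
    simp only [ite_le_eq_snoc] at hleast
    exact notMem_span_and_pred_mem_span_of_isLeast hleast

theorem fundamental_volume_ratio_bound_lattice_general
    (d : ℕ)
    (L : Set (Fin (d + 1) → ℝ))
    -- the sequence of best approximation points to the x₀-axis:
    (zs : ℕ → Fin (d + 1) → ℝ) (hzs : ∀ ν, zs ν ∈ L)
    (hpos : ∀ ν, 0 < zs ν 0)
    (hinc : StrictMono fun ν => zs ν 0)
    (hdec : StrictAnti fun ν => ⨆ j : Fin d, |zs ν j.succ|)
    -- the selected indices ν₁ = 1, ν₂ = 2, ν₃, … (0-indexed by `n`):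
    (n : ℕ → ℕ) (hn0 : n 0 = 0) (hn1 : n 1 = 1)
    (hsel : ∀ j : ℕ, 1 ≤ j → j < d →
      IsLeast {μ : ℕ | n j < μ ∧
          LinearIndependent ℝ (fun i : Fin (j + 2) =>
            if (i : ℕ) ≤ j then zs (n i) else zs μ)}
        (n (j + 1))) :
    -- for every j, and every pair of ℤ-bases of Γ_j = π_j ∩ Λ and Γ_{j+1} = π_{j+1} ∩ Λ:
    ∀ j : ℕ, j < d →
      ∀ B1 : Fin (j + 1) → Fin (d + 1) → ℝ, ∀ B2 : Fin (j + 2) → Fin (d + 1) → ℝ,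
      (LinearIndependent ℤ B1 ∧
        (Submodule.span ℤ (Set.range B1) : Set (Fin (d + 1) → ℝ)) =
          {v : Fin (d + 1) → ℝ | v ∈ L ∧
            v ∈ Submodule.span ℝ (Set.range fun i : Fin (j + 1) => zs (n i))}) →
      (LinearIndependent ℤ B2 ∧
        (Submodule.span ℤ (Set.range B2) : Set (Fin (d + 1) → ℝ)) =
          {v : Fin (d + 1) → ℝ | v ∈ L ∧
            v ∈ Submodule.span ℝ (Set.range fun i : Fin (j + 2) => zs (n i))}) →
      gramVol B2 / gramVol B1 ≤
        2 * Real.sqrt d * (zs (n (j + 1)) 0 / zs (n (j + 1) - 1) 0) *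
          ⨆ jj : Fin d, |zs (n (j + 1) - 1) jj.succ| := by
  intro j hjd B1 B2 ⟨_, hB1⟩ ⟨_, hB2⟩
  simp only [iSup_abs_succ_eq_norm_tail] at hdec ⊢
  obtain ⟨hν, hμ⟩ := selected_notMem_span_and_pred_mem_span hpos hinc hdec hn0 hn1 hsel hjd
  have hπB1 := span_real_eq_of_span_int_eq (fun i : Fin (j + 1) => hzs (n i)) hB1
  have hπle : span ℝ (range fun i : Fin (j + 1) => zs (n i)) ≤
      span ℝ (range fun i : Fin (j + 2) => zs (n i)) :=
    span_mono (range_subset_iff.2 fun i => ⟨i.castSucc, rfl⟩)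
  have hB1B2 : ∀ i, B1 i ∈ span ℤ (range B2) := fun i => by
    obtain ⟨hL, hS⟩ := hB1.subset (subset_span (mem_range_self i))
    exact hB2.symm.subset ⟨hL, hπle hS⟩
  have hνB2 : zs (n (j + 1)) ∈ span ℤ (range B2) :=
    hB2.symm.subset ⟨hzs _, subset_span ⟨Fin.last _, rfl⟩⟩
  rcases eq_or_ne (gramVol B1) 0 with h0 | h0
  · rw [h0, div_zero]
    exact mul_nonneg (mul_nonneg (by positivity) (div_nonneg (hpos _).le (hpos _).le))
      (norm_nonneg _)
  refine (div_le_iff₀ ((Real.sqrt_nonneg _).lt_of_ne' h0)).2 ?_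
  calc gramVol B2 ≤ _ * gramVol B1 :=
        gramVol_le_of_mem_span_int hB1B2 hνB2 (hπB1 ▸ hν) (hπB1 ▸ smul_mem _ _ hμ) h0
    _ ≤ _ := mul_le_mul_of_nonneg_right
        (sqrt_dotProduct_sub_smul_le (hpos _) (hinc.monotone (Nat.sub_le _ 1))
          (hdec.antitone (Nat.sub_le _ 1))) (Real.sqrt_nonneg _)

theorem fundamental_volume_ratio_bound_lattice
    (d : ℕ)
    -- Λ is a full-rank lattice in ℝ^{d+1}, given by an ℝ-basis:
    (bas : Fin (d + 1) → Fin (d + 1) → ℝ) (hbas : LinearIndependent ℝ bas)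
    (L : Set (Fin (d + 1) → ℝ))
    (hL : L = (Submodule.span ℤ (Set.range bas) : Submodule ℤ (Fin (d + 1) → ℝ)))
    -- the only lattice point with x₀ = 0 is the origin:
    (hx0 : ∀ x ∈ L, x 0 = 0 → x = 0)
    -- the sequence of best approximation points to the x₀-axis:
    (zs : ℕ → Fin (d + 1) → ℝ) (hzs : ∀ ν, zs ν ∈ L)
    (hpos : ∀ ν, 0 < zs ν 0)
    (hinc : StrictMono fun ν => zs ν 0)
    (hdec : StrictAnti fun ν => ⨆ j : Fin d, |zs ν j.succ|)
    (hbest : ∀ ν, ∀ w ∈ L, |w 0| ≤ zs (ν + 1) 0 →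
      (⨆ j : Fin d, |w j.succ|) ≤ (⨆ j : Fin d, |zs ν j.succ|) →
      w = 0 ∨ w = zs ν ∨ w = -zs ν ∨ w = zs (ν + 1) ∨ w = -zs (ν + 1))
    -- the best approximation points do not lie in a proper linear subspace:
    (hspan : Submodule.span ℝ (Set.range zs) = ⊤)
    -- the selected indices ν₁ = 1, ν₂ = 2, ν₃, … (0-indexed by `n`):
    (n : ℕ → ℕ) (hn0 : n 0 = 0) (hn1 : n 1 = 1)
    (hsel : ∀ j : ℕ, 1 ≤ j → j < d →
      IsLeast {μ : ℕ | n j < μ ∧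
          LinearIndependent ℝ (fun i : Fin (j + 2) =>
            if (i : ℕ) ≤ j then zs (n i) else zs μ)}
        (n (j + 1))) :
    -- for every j, and every pair of ℤ-bases of Γ_j = π_j ∩ Λ and Γ_{j+1} = π_{j+1} ∩ Λ:
    ∀ j : ℕ, j < d →
      ∀ B1 : Fin (j + 1) → Fin (d + 1) → ℝ, ∀ B2 : Fin (j + 2) → Fin (d + 1) → ℝ,
      (LinearIndependent ℤ B1 ∧
        (Submodule.span ℤ (Set.range B1) : Set (Fin (d + 1) → ℝ)) =
          {v : Fin (d + 1) → ℝ | v ∈ L ∧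
            v ∈ Submodule.span ℝ (Set.range fun i : Fin (j + 1) => zs (n i))}) →
      (LinearIndependent ℤ B2 ∧
        (Submodule.span ℤ (Set.range B2) : Set (Fin (d + 1) → ℝ)) =
          {v : Fin (d + 1) → ℝ | v ∈ L ∧
            v ∈ Submodule.span ℝ (Set.range fun i : Fin (j + 2) => zs (n i))}) →
      gramVol B2 / gramVol B1 ≤
        2 * Real.sqrt d * (zs (n (j + 1)) 0 / zs (n (j + 1) - 1) 0) *
          ⨆ jj : Fin d, |zs (n (j + 1) - 1) jj.succ| :=
  fundamental_volume_ratio_bound_lattice_general d L zs hzs hpos hinc hdec n hn0 hn1 hsel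
end

section
/- Let v = (p,b₁,b₂) ∈ ℤ³ with p ≥ 1 be a primitive integer vector and V = (b₁/p, b₂/p) the corresponding rational point, and set δ = 1/(2p²). Then for every x ∈ ℝ² with |x − V|_∞ < δ, the vector v is a best approximation vector for x. -/
/-- `z = (q, a₁, a₂) ∈ ℤ³` is a best approximation vector for `(x₁, x₂) ∈ ℝ²`:
`q ≥ 1`, the `a_j` are nearest integers to `q x_j`, and the approximation beats
every smaller positive denominator. -/
def IsBestApprox2 (x₁ x₂ : ℝ) (z : Fin 3 → ℤ) : Prop :=
  1 ≤ z 0 ∧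
  max |(z 0 : ℝ) * x₁ - (z 1 : ℝ)| |(z 0 : ℝ) * x₂ - (z 2 : ℝ)| =
    max (dist01 ((z 0 : ℝ) * x₁)) (dist01 ((z 0 : ℝ) * x₂)) ∧
  ∀ q' : ℤ, 1 ≤ q' → q' < z 0 →
    max |(z 0 : ℝ) * x₁ - (z 1 : ℝ)| |(z 0 : ℝ) * x₂ - (z 2 : ℝ)| <
      max (dist01 ((q' : ℝ) * x₁)) (dist01 ((q' : ℝ) * x₂))

/-- If `y` is within `1/2` of an integer `a`, then `dist01 y = |y - a|`. -/
lemma dist01_eq_of_lt_half (y : ℝ) (a : ℤ) (h : |y - (a : ℝ)| < 1 / 2) :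
    dist01 y = |y - (a : ℝ)| := by
  have h1 : |y - (round y : ℝ)| ≤ 1 / 2 := abs_sub_round y
  have h2 : |y - (round y : ℝ)| ≤ |y - (a : ℝ)| := round_le y a
  have : round y = a := by
    by_contra hne
    have : (1 : ℝ) ≤ |(round y : ℝ) - (a : ℝ)| := by
      have h0 := Int.one_le_abs (sub_ne_zero.mpr hne)
      have h0' : (1:ℝ) ≤ |((round y - a : ℤ) : ℝ)| := by exact_mod_cast h0
      push_cast at h0'
      exact h0'
    have h3 : |(round y : ℝ) - (a : ℝ)| ≤ |y - round y| + |y - a| := by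
      have := abs_sub_abs_le_abs_sub (y - (a:ℝ)) (y - (round y : ℝ))
      calc |(round y : ℝ) - (a : ℝ)| = |(y - (a:ℝ)) - (y - (round y : ℝ))| := by ring_nf
        _ ≤ |y - (a:ℝ)| + |y - (round y : ℝ)| := abs_sub _ _
        _ = |y - round y| + |y - a| := by ring
    linarith
  rw [dist01, this]

/-- `dist01` near-Lipschitz: `dist01 z - |y - z| ≤ dist01 y`. -/
lemma dist01_ge (y z : ℝ) : dist01 z - |y - z| ≤ dist01 y := by
  have h1 : dist01 z ≤ |z - (round y : ℝ)| := round_le z (round y)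
  have h2 : |z - (round y : ℝ)| ≤ |z - y| + |y - (round y : ℝ)| := by
    calc |z - (round y : ℝ)| = |(z - y) + (y - (round y : ℝ))| := by ring_nf
      _ ≤ |z - y| + |y - (round y : ℝ)| := abs_add_le _ _
  have h3 : |z - y| = |y - z| := abs_sub_comm z y
  simp only [dist01] at h1 ⊢
  linarith

/-- If `p ∤ m`, the rational `m/p` is at distance at least `1/p` from any integer. -/
lemma dist01_rat_ge (m p : ℤ) (hp : 1 ≤ p) (h : ¬ p ∣ m) :
    1 / (p : ℝ) ≤ dist01 ((m : ℝ) / (p : ℝ)) := by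
  set r := round ((m : ℝ) / (p : ℝ))
  have hp0 : (0:ℝ) < p := by exact_mod_cast hp
  have hne : m - r * p ≠ 0 := by
    intro h0
    exact h ⟨r, by linarith [sub_eq_zero.mp h0]⟩
  have h1 : (1:ℝ) ≤ |((m - r * p : ℤ) : ℝ)| := by
    have := Int.one_le_abs hne
    calc (1:ℝ) ≤ (|m - r * p| : ℤ) := by exact_mod_cast this
      _ = |((m - r * p : ℤ) : ℝ)| := by rw [Int.cast_abs]
  have key : dist01 ((m : ℝ) / (p : ℝ)) = |((m - r * p : ℤ) : ℝ)| / p := by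
    rw [dist01]
    have e : (m:ℝ)/(p:ℝ) - (r:ℝ) = ((m - r * p : ℤ) : ℝ) / p := by
      push_cast; field_simp
    rw [e, abs_div, abs_of_pos hp0]
  rw [key]
  gcongr

/-- Primitivity: if `p ∣ q'·b₁` and `p ∣ q'·b₂` with `gcd(gcd p b₁) b₂ = 1`, then `p ∣ q'`. -/
lemma dvd_of_dvd_muls (p b₁ b₂ q' : ℤ)
    (hprim : Int.gcd (Int.gcd p b₁) b₂ = 1)
    (h1 : p ∣ q' * b₁) (h2 : p ∣ q' * b₂) : p ∣ q' := by
  have e1 : (Int.gcd p b₁ : ℤ) = p * Int.gcdA p b₁ + b₁ * Int.gcdB p b₁ := Int.gcd_eq_gcd_ab p b₁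
  have e2 : (Int.gcd (Int.gcd p b₁ : ℤ) b₂ : ℤ) =
      (Int.gcd p b₁ : ℤ) * Int.gcdA (Int.gcd p b₁) b₂ + b₂ * Int.gcdB (Int.gcd p b₁) b₂ :=
    Int.gcd_eq_gcd_ab _ b₂
  rw [hprim] at e2
  set A := Int.gcdA p b₁; set B := Int.gcdB p b₁
  set C := Int.gcdA (Int.gcd p b₁) b₂; set D := Int.gcdB (Int.gcd p b₁) b₂
  have key : q' = p * (q' * A * C) + (q' * b₁) * (B * C) + (q' * b₂) * D := by
    have : (1:ℤ) = (p * A + b₁ * B) * C + b₂ * D := by rw [← e1]; exact_mod_cast e2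
    calc q' = q' * 1 := (mul_one q').symm
      _ = q' * ((p * A + b₁ * B) * C + b₂ * D) := by rw [← this]
      _ = p * (q' * A * C) + (q' * b₁) * (B * C) + (q' * b₂) * D := by ring
  rw [key]
  exact dvd_add (dvd_add (Dvd.intro _ rfl) (h1.mul_right _)) (h2.mul_right _)

theorem primitive_vector_is_best_approx_nearby
    (v : Fin 3 → ℤ) (hp : 1 ≤ v 0)
    (hprim : Int.gcd (Int.gcd (v 0) (v 1)) (v 2) = 1)
    (x₁ x₂ : ℝ)
    (hx : max |x₁ - (v 1 : ℝ) / (v 0 : ℝ)| |x₂ - (v 2 : ℝ) / (v 0 : ℝ)| <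
      1 / (2 * (v 0 : ℝ) ^ 2)) :
    IsBestApprox2 x₁ x₂ v := by
  set p : ℤ := v 0 with hpdef
  set b₁ : ℤ := v 1
  set b₂ : ℤ := v 2
  have hp0 : (0:ℝ) < (p:ℝ) := by exact_mod_cast hp
  have hp1 : (1:ℝ) ≤ (p:ℝ) := by exact_mod_cast hp
  have hx1 : |x₁ - (b₁ : ℝ) / (p : ℝ)| < 1 / (2 * (p : ℝ) ^ 2) := lt_of_le_of_lt (le_max_left _ _) hx
  have hx2 : |x₂ - (b₂ : ℝ) / (p : ℝ)| < 1 / (2 * (p : ℝ) ^ 2) := lt_of_le_of_lt (le_max_right _ _) hx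
  -- |p x_j - b_j| < 1/(2p)
  have key : ∀ (x : ℝ) (b : ℤ), |x - (b : ℝ) / (p : ℝ)| < 1 / (2 * (p : ℝ) ^ 2) →
      |(p : ℝ) * x - (b : ℝ)| < 1 / (2 * (p : ℝ)) := by
    intro x b h
    have e : (p : ℝ) * x - (b : ℝ) = (p:ℝ) * (x - (b : ℝ) / (p : ℝ)) := by
      field_simp
    rw [e, abs_mul, abs_of_pos hp0]
    calc (p:ℝ) * |x - (b : ℝ) / (p : ℝ)| < (p:ℝ) * (1 / (2 * (p : ℝ) ^ 2)) := by
          exact (mul_lt_mul_iff_right₀ hp0).mpr h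
      _ = 1 / (2 * (p : ℝ)) := by field_simp
  have k1 := key x₁ b₁ hx1
  have k2 := key x₂ b₂ hx2
  have half : 1 / (2 * (p : ℝ)) ≤ 1 / 2 := by
    apply div_le_div_of_nonneg_left (by norm_num) (by norm_num) (by linarith)
  have d1 : dist01 ((p : ℝ) * x₁) = |(p : ℝ) * x₁ - (b₁ : ℝ)| :=
    dist01_eq_of_lt_half _ _ (lt_of_lt_of_le k1 half)
  have d2 : dist01 ((p : ℝ) * x₂) = |(p : ℝ) * x₂ - (b₂ : ℝ)| :=
    dist01_eq_of_lt_half _ _ (lt_of_lt_of_le k2 half)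
  refine ⟨hp, by rw [d1, d2], ?_⟩
  intro q' hq1 hqp
  -- find j with ¬ p ∣ q' b_j
  have hq0 : (0:ℝ) < (q':ℝ) := by exact_mod_cast hq1
  have hqpR : (q':ℝ) < (p:ℝ) := by exact_mod_cast hqp
  have hnd : ¬ p ∣ q' * b₁ ∨ ¬ p ∣ q' * b₂ := by
    by_contra h
    push_neg at h
    have := dvd_of_dvd_muls p b₁ b₂ q' hprim h.1 h.2
    have := Int.le_of_dvd (by omega) this
    omega
  -- lower bound for the chosen coordinate
  have bound : ∀ (x : ℝ) (b : ℤ), ¬ p ∣ q' * b →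
      |x - (b : ℝ) / (p : ℝ)| < 1 / (2 * (p : ℝ) ^ 2) →
      1 / (2 * (p:ℝ)) < dist01 ((q' : ℝ) * x) := by
    intro x b hnd h
    have hrat : 1 / (p:ℝ) ≤ dist01 (((q' * b : ℤ) : ℝ) / (p:ℝ)) := dist01_rat_ge _ p hp hnd
    have hdiff : |(q':ℝ) * x - ((q' * b : ℤ) : ℝ) / (p:ℝ)| < 1 / (2 * (p:ℝ)) := by
      have : (q':ℝ) * x - ((q' * b : ℤ) : ℝ) / (p:ℝ) = (q':ℝ) * (x - (b:ℝ)/(p:ℝ)) := by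
        push_cast; field_simp
      rw [this, abs_mul, abs_of_pos hq0]
      calc (q':ℝ) * |x - (b:ℝ)/(p:ℝ)| < (q':ℝ) * (1 / (2 * (p : ℝ) ^ 2)) :=
            (mul_lt_mul_iff_right₀ hq0).mpr h
        _ < (p:ℝ) * (1 / (2 * (p : ℝ) ^ 2)) := by
            apply mul_lt_mul_of_pos_right hqpR
            positivity
        _ = 1 / (2 * (p:ℝ)) := by field_simp
    have := dist01_ge ((q':ℝ) * x) (((q' * b : ℤ) : ℝ) / (p:ℝ))
    have hhalf : 1 / (p:ℝ) - 1 / (2 * (p:ℝ)) = 1 / (2 * (p:ℝ)) := by field_simp; ring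
    linarith
  have lhs_lt : max |(p : ℝ) * x₁ - (b₁ : ℝ)| |(p : ℝ) * x₂ - (b₂ : ℝ)| < 1 / (2 * (p:ℝ)) :=
    max_lt k1 k2
  rcases hnd with h | h
  · have := bound x₁ b₁ h hx1
    calc max |(p : ℝ) * x₁ - (b₁ : ℝ)| |(p : ℝ) * x₂ - (b₂ : ℝ)| < 1 / (2 * (p:ℝ)) := lhs_lt
      _ < dist01 ((q' : ℝ) * x₁) := this
      _ ≤ max (dist01 ((q' : ℝ) * x₁)) (dist01 ((q' : ℝ) * x₂)) := le_max_left _ _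
  · have := bound x₂ b₂ h hx2
    calc max |(p : ℝ) * x₁ - (b₁ : ℝ)| |(p : ℝ) * x₂ - (b₂ : ℝ)| < 1 / (2 * (p:ℝ)) := lhs_lt
      _ < dist01 ((q' : ℝ) * x₂) := this
      _ ≤ max (dist01 ((q' : ℝ) * x₁)) (dist01 ((q' : ℝ) * x₂)) := le_max_right _ _
end
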